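/- arXiv:1510.03828 — 8 statements merged into one kernel-verified Lean document; each statement's English description precedes it below -/
import Mathlib

section
/- Let V be a countable set, β = {β_v} a family of positive reals, and let ℓ²(β) be the weighted ℓ² space of functions f : V → ℂ with ∑_v |f(v)|² β_v < ∞. Given a rooted directed tree T = (V,E) with parent map par, weights λ = {λ_v}_{v∈V°} ⊆ ℂ, and the map (Λf)(v) = λ_v f(par(v)) for v ≠ root, (Λf)(root) = 0, define the weighted shift S_λ with domain {f ∈ ℓ²(β) : Λf ∈ ℓ²(β)} and S_λ f = Λf. Then S_λ is bounded on ℓ²(β) (i.e., everywhere defined and bounded) if and only if sup_{u∈V} ∑_{v ∈ Chi(u)} |λ_v|² β_v / β_u < ∞. -/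
open scoped ENNReal
open Filter

noncomputable section

/-- Membership in the weighted ℓ² space ℓ²(β). -/
def MemL2 {V : Type*} (β : V → ℝ) (f : V → ℂ) : Prop :=
  Summable fun v => β v * ‖f v‖ ^ 2

/-- The squared norm in ℓ²(β). -/
noncomputable def wnormSq {V : Type*} (β : V → ℝ) (f : V → ℂ) : ℝ :=
  ∑' v, β v * ‖f v‖ ^ 2

/-- The inner product of ℓ²(β). -/
noncomputable def winner {V : Type*} (β : V → ℝ) (f g : V → ℂ) : ℂ :=
  ∑' v, f v * (starRingEnd ℂ) (g v) * (β v : ℂ)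

/-- The indicator (basis) vector e_u. -/
def eVec {V : Type*} [DecidableEq V] (u : V) : V → ℂ :=
  fun v => if v = u then 1 else 0

/-- The formal weighted-shift map Λ with complex weights. -/
def shiftMap {V : Type*} [DecidableEq V] (root : V) (par : V → V) (lam : V → ℂ)
    (f : V → ℂ) : V → ℂ :=
  fun v => if v = root then 0 else lam v * f (par v)

/-- The formal weighted-shift map Λ with positive real weights. -/
def shiftMapR {V : Type*} [DecidableEq V] (root : V) (par : V → V) (lam : V → ℝ)
    (f : V → ℂ) : V → ℂ :=
  fun v => if v = root then 0 else (lam v : ℂ) * f (par v)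

/-- λ_{par^k(v)|v} : the product of the weights along the path from par^k(v) to v. -/
noncomputable def lamProd {V : Type*} (par : V → V) (lam : V → ℝ) (k : ℕ) (v : V) : ℝ :=
  ∏ j ∈ Finset.range k, lam (par^[j] v)

/-- The formal multiplication map Γ_φ̂. -/
noncomputable def gammaMap {V : Type*} (par : V → V) (depth : V → ℕ) (lam : V → ℝ)
    (φ : ℕ → ℂ) (f : V → ℂ) : V → ℂ :=
  fun v => ∑ k ∈ Finset.range (depth v + 1),
    ((lamProd par lam k v : ℝ) : ℂ) * φ k * f (par^[k] v)

/-- φ̂ is a multiplier: the multiplication operator M_φ̂ is everywhere defined on ℓ²(β). -/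
def Mult {V : Type*} (par : V → V) (depth : V → ℕ) (β lam : V → ℝ) (φ : ℕ → ℂ) : Prop :=
  ∀ f : V → ℂ, MemL2 β f → MemL2 β (gammaMap par depth lam φ f)

/-- The operator norm (w.r.t. ℓ²(β)) of a formal map T. -/
noncomputable def opNorm {V : Type*} (β : V → ℝ) (T : (V → ℂ) → (V → ℂ)) : ℝ :=
  sInf {C : ℝ | 0 ≤ C ∧ ∀ f : V → ℂ, MemL2 β f →
    wnormSq β (T f) ≤ C ^ 2 * wnormSq β f}

/-- Cauchy product of symbols. -/
def cauchyMul (φ ψ : ℕ → ℂ) : ℕ → ℂ :=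
  fun k => ∑ j ∈ Finset.range (k + 1), φ j * ψ (k - j)

/-- The spectral radius of the weighted shift, via the Gelfand formula. -/
noncomputable def specRad {V : Type*} [DecidableEq V] (root : V) (par : V → V)
    (β lam : V → ℝ) : ℝ :=
  ⨅ n : ℕ, (opNorm β (fun f => (shiftMapR root par lam)^[n + 1] f)) ^ ((1 : ℝ) / ((n : ℝ) + 1))

/-- The explicit formula for the adjoint S_λ^* of the weighted shift. -/
noncomputable def SStar {V : Type*} [DecidableEq V] (root : V) (par : V → V)
    (β lam : V → ℝ) (g : V → ℂ) : V → ℂ :=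
  fun u => ∑' v : {v : V // v ≠ root ∧ par v = u}, ((lam v.1 * (β v.1 / β u) : ℝ) : ℂ) * g v.1

/-- p : ℕ → V enumerates a path of the directed tree. -/
def IsPath {V : Type*} (root : V) (par : V → V) (p : ℕ → V) : Prop :=
  p 0 = root ∧ ∀ k, par (p (k + 1)) = p k ∧ p (k + 1) ≠ root

/-- r₂^P(S_λ) for a path p. -/
noncomputable def r2P {V : Type*} (β lam : V → ℝ) (p : ℕ → V) : ℝ :=
  Filter.liminf
    (fun k : ℕ => (Real.sqrt (β (p k)) * ∏ j ∈ Finset.range k, lam (p (j + 1))) ^ ((1 : ℝ) / (k : ℝ)))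
    Filter.atTop

/-- r₂⁺(S_λ) : the supremum of r₂^P(S_λ) over all paths. -/
noncomputable def r2plus {V : Type*} (root : V) (par : V → V) (β lam : V → ℝ) : ℝ :=
  sSup {r : ℝ | ∃ p : ℕ → V, IsPath root par p ∧ r = r2P β lam p}

private def chiEquiv {V : Type*} (root : V) (par : V → V) :
    {v : V // v ≠ root} ≃ Σ u : V, {v : V // v ≠ root ∧ par v = u} where
  toFun v := ⟨par v.1, ⟨v.1, v.2, rfl⟩⟩
  invFun p := ⟨p.2.1, p.2.2.1⟩
  left_inv v := rfl
  right_inv p := by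
    obtain ⟨u, v, hv, hpar⟩ := p
    subst hpar
    rfl

private lemma tsum_partition {V : Type*} (root : V) (par : V → V) (G : V → ℝ≥0∞)
    (h0 : G root = 0) :
    ∑' v, G v = ∑' u : V, ∑' v : {v : V // v ≠ root ∧ par v = u}, G v.1 := by
  have h1 : ∑' v : {v : V // v ≠ root}, G v.1 = ∑' v, G v :=
    tsum_subtype_eq_of_support_subset (s := {v | v ≠ root}) (by
      intro v hv hroot
      exact hv (hroot ▸ h0))
  have h2 := Equiv.tsum_eq (chiEquiv root par)
    (fun p : Σ u : V, {v : V // v ≠ root ∧ par v = u} => G p.2.1)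
  calc ∑' v, G v = ∑' v : {v : V // v ≠ root}, G v.1 := h1.symm
    _ = ∑' p : Σ u : V, {v : V // v ≠ root ∧ par v = u}, G p.2.1 := h2
    _ = ∑' u : V, ∑' v : {v : V // v ≠ root ∧ par v = u}, G v.1 :=
        ENNReal.tsum_sigma' _

/-- the weighted shift S_λ is bounded on ℓ²(β) iff
sup_u ∑_{v ∈ Chi(u)} |λ_v|² β_v/β_u < ∞. -/
theorem stmt0 {V : Type*} [Countable V] [Infinite V] [DecidableEq V]
    (root : V) (par : V → V) (depth : V → ℕ)
    (hdepth0 : depth root = 0)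
    (hdepth : ∀ v, v ≠ root → depth v = depth (par v) + 1)
    (hreach : ∀ v, par^[depth v] v = root)
    (β : V → ℝ) (hβ : ∀ v, 0 < β v)
    (lam : V → ℂ) :
    (∃ C : ℝ, ∀ f : V → ℂ, MemL2 β f →
        MemL2 β (shiftMap root par lam f) ∧
        wnormSq β (shiftMap root par lam f) ≤ C * wnormSq β f)
    ↔
    (⨆ u : V, ∑' v : {v : V // v ≠ root ∧ par v = u},
        ENNReal.ofReal (‖lam v.1‖ ^ 2 * β v.1 / β u)) < ⊤ := by
  classical
  set S : V → ℝ≥0∞ := fun u => ∑' v : {v : V // v ≠ root ∧ par v = u},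
      ENNReal.ofReal (‖lam v.1‖ ^ 2 * β v.1 / β u) with hS
  have key : ∀ f : V → ℂ,
      (∑' v, ENNReal.ofReal (β v * ‖shiftMap root par lam f v‖ ^ 2))
        = ∑' u, S u * ENNReal.ofReal (β u * ‖f u‖ ^ 2) := by
    intro f
    rw [tsum_partition root par _ (by simp [shiftMap])]
    congr 1
    funext u
    rw [hS]
    simp only
    rw [← ENNReal.tsum_mul_right]
    congr 1
    funext v
    obtain ⟨v, hv, hpar⟩ := v
    simp only [shiftMap, if_neg hv, hpar]
    rw [← ENNReal.ofReal_mul (div_nonneg (mul_nonneg (by positivity) (hβ v).le) (hβ u).le)]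
    congr 1
    have hβu : β u ≠ 0 := (hβ u).ne'
    rw [norm_mul, mul_pow]
    field_simp
  have hnn : ∀ g : V → ℂ, ∀ v, 0 ≤ β v * ‖g v‖ ^ 2 := fun g v =>
    mul_nonneg (hβ v).le (by positivity)
  constructor
  · rintro ⟨C, h⟩
    have heu : ∀ u : V, MemL2 β (eVec u) := by
      intro u
      apply summable_of_ne_finset_zero (s := {u})
      intro v hv
      simp only [Finset.mem_singleton] at hv
      simp [eVec, hv]
    have hwe : ∀ u : V, wnormSq β (eVec u) = β u := by
      intro u
      have := tsum_eq_single (L := SummationFilter.unconditional V) (f := fun v => β v * ‖eVec u v‖ ^ 2) u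
        (fun v hv => by simp [eVec, hv])
      rw [wnormSq, this]
      simp [eVec]
    refine lt_of_le_of_lt (iSup_le fun u => ?_) (ENNReal.ofReal_lt_top : ENNReal.ofReal C < ⊤)
    obtain ⟨hmem, hbound⟩ := h (eVec u) (heu u)
    rw [hwe u] at hbound
    have hnn2 : 0 ≤ wnormSq β (shiftMap root par lam (eVec u)) :=
      tsum_nonneg (hnn _)
    have hC : 0 ≤ C := by nlinarith [hβ u]
    have h1 : ENNReal.ofReal (wnormSq β (shiftMap root par lam (eVec u)))
        = ∑' v, ENNReal.ofReal (β v * ‖shiftMap root par lam (eVec u) v‖ ^ 2) :=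
      ENNReal.ofReal_tsum_of_nonneg (hnn _) hmem
    have h2 : (∑' v, ENNReal.ofReal (β v * ‖shiftMap root par lam (eVec u) v‖ ^ 2))
        = S u * ENNReal.ofReal (β u * ‖(1 : ℂ)‖ ^ 2) := by
      rw [key (eVec u)]
      refine tsum_eq_single u (fun w hw => ?_) |>.trans (by simp [eVec])
      simp [eVec, hw]
    have h3 : S u * ENNReal.ofReal (β u) ≤ ENNReal.ofReal C * ENNReal.ofReal (β u) := by
      rw [← ENNReal.ofReal_mul hC]
      calc S u * ENNReal.ofReal (β u)
          = ENNReal.ofReal (wnormSq β (shiftMap root par lam (eVec u))) := by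
            rw [h1, h2]; simp
        _ ≤ ENNReal.ofReal (C * β u) := ENNReal.ofReal_le_ofReal hbound
    exact (ENNReal.mul_le_mul_iff_left (ENNReal.ofReal_pos.2 (hβ u)).ne'
      ENNReal.ofReal_ne_top).mp h3
  · intro hsup
    refine ⟨(⨆ u, S u).toReal, fun f hf => ?_⟩
    have hW : 0 ≤ wnormSq β f := tsum_nonneg (hnn f)
    have hofW : ENNReal.ofReal (wnormSq β f) = ∑' u, ENNReal.ofReal (β u * ‖f u‖ ^ 2) :=
      ENNReal.ofReal_tsum_of_nonneg (hnn f) hf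
    have hA : (∑' v, ENNReal.ofReal (β v * ‖shiftMap root par lam f v‖ ^ 2))
        ≤ (⨆ u, S u) * ENNReal.ofReal (wnormSq β f) := by
      rw [key f, hofW]
      calc ∑' u, S u * ENNReal.ofReal (β u * ‖f u‖ ^ 2)
          ≤ ∑' u, (⨆ w, S w) * ENNReal.ofReal (β u * ‖f u‖ ^ 2) :=
            ENNReal.tsum_le_tsum fun u => mul_le_mul_left (le_iSup _ u) _
        _ = (⨆ w, S w) * ∑' u, ENNReal.ofReal (β u * ‖f u‖ ^ 2) := ENNReal.tsum_mul_left
    have hfin : (∑' v, ENNReal.ofReal (β v * ‖shiftMap root par lam f v‖ ^ 2)) ≠ ⊤ :=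
      (lt_of_le_of_lt hA (ENNReal.mul_lt_top hsup ENNReal.ofReal_lt_top)).ne
    have hsummable : MemL2 β (shiftMap root par lam f) := by
      have h := ENNReal.summable_toReal hfin
      exact h.congr fun v => ENNReal.toReal_ofReal (hnn _ v)
    refine ⟨hsummable, ?_⟩
    have h1 : ENNReal.ofReal (wnormSq β (shiftMap root par lam f))
        = ∑' v, ENNReal.ofReal (β v * ‖shiftMap root par lam f v‖ ^ 2) :=
      ENNReal.ofReal_tsum_of_nonneg (hnn _) hsummable
    have h2 : wnormSq β (shiftMap root par lam f)
        = (ENNReal.ofReal (wnormSq β (shiftMap root par lam f))).toReal :=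
      (ENNReal.toReal_ofReal (tsum_nonneg (hnn _))).symm
    rw [h2, h1]
    calc (∑' v, ENNReal.ofReal (β v * ‖shiftMap root par lam f v‖ ^ 2)).toReal
        ≤ ((⨆ u, S u) * ENNReal.ofReal (wnormSq β f)).toReal :=
          ENNReal.toReal_mono (ENNReal.mul_lt_top hsup ENNReal.ofReal_lt_top).ne hA
      _ = (⨆ u, S u).toReal * wnormSq β f := by
          rw [ENNReal.toReal_mul, ENNReal.toReal_ofReal hW]

end
end

section
/- With the notation above, if the weighted shift S_λ on ℓ²(β) is bounded, then for every k ∈ ℕ, ‖S_λ^k‖² = sup_{u∈V} ∑_{v ∈ Chi^{⟨k⟩}(u)} |λ_{u|v}|² β_v / β_u, where Chi^{⟨k⟩}(u) is the set of vertices v with par^k(v) = u, and λ_{u|v} = ∏_{j=0}^{k-1} λ_{par^j(v)} for v ∈ Chi^{⟨k⟩}(u). -/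
open scoped ENNReal
open Filter

noncomputable section

open Classical in
lemma shift_iter_apply {V : Type*} [DecidableEq V] (root : V) (par : V → V) (lam : V → ℂ)
    (k : ℕ) (f : V → ℂ) (v : V) :
    (shiftMap root par lam)^[k] f v =
      if ∀ j < k, par^[j] v ≠ root then
        (∏ j ∈ Finset.range k, lam (par^[j] v)) * f (par^[k] v) else 0 := by
  induction k generalizing v with
  | zero => simp
  | succ k ih =>
    rw [Function.iterate_succ_apply']
    simp only [shiftMap]
    by_cases hv : v = root
    · rw [if_pos hv, if_neg]
      push_neg
      exact ⟨0, by omega, by simpa using hv⟩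
    · rw [if_neg hv, ih (par v)]
      by_cases hc : ∀ j < k, par^[j] (par v) ≠ root
      · rw [if_pos hc, if_pos]
        · rw [Finset.prod_range_succ', Function.iterate_succ_apply]
          simp only [Function.iterate_succ_apply, Function.iterate_zero_apply]
          ring
        · intro j hj
          match j with
          | 0 => simpa using hv
          | (j+1) => rw [Function.iterate_succ_apply]; exact hc j (by omega)
      · rw [if_neg hc, if_neg, mul_zero]
        push_neg at hc ⊢
        obtain ⟨j, hj, hj'⟩ := hc
        exact ⟨j + 1, by omega, by rwa [Function.iterate_succ_apply]⟩

lemma depth_of_no_root {V : Type*} (root : V) (par : V → V) (depth : V → ℕ)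
    (hdepth : ∀ v, v ≠ root → depth v = depth (par v) + 1)
    (k : ℕ) (v : V) (h : ∀ j < k, par^[j] v ≠ root) :
    depth v = depth (par^[k] v) + k := by
  induction k generalizing v with
  | zero => simp
  | succ k ih =>
    have hv : v ≠ root := by simpa using h 0 (by omega)
    have h1 : depth v = depth (par v) + 1 := hdepth v hv
    have h2 := ih (par v) (fun j hj => by
      rw [← Function.iterate_succ_apply]; exact h (j+1) (by omega))
    rw [← Function.iterate_succ_apply] at h2
    simp only [Nat.succ_eq_add_one] at h2
    omega

open Classical in
lemma no_root_iff_depth {V : Type*} (root : V) (par : V → V) (depth : V → ℕ)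
    (hdepth0 : depth root = 0)
    (hdepth : ∀ v, v ≠ root → depth v = depth (par v) + 1)
    (k : ℕ) (v : V) :
    (∀ j < k, par^[j] v ≠ root) ↔ depth v = depth (par^[k] v) + k := by
  constructor
  · exact depth_of_no_root root par depth hdepth k v
  · intro h
    by_contra hc
    push_neg at hc
    have hex : ∃ j, par^[j] v = root ∧ j < k := by
      obtain ⟨j, hj, hj'⟩ := hc; exact ⟨j, hj', hj⟩
    obtain ⟨j0, ⟨hj0, hj0k⟩, hmin⟩ := Nat.findX hex
    have : depth v = depth (par^[j0] v) + j0 :=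
      depth_of_no_root root par depth hdepth j0 v (fun i hi hroot =>
        hmin i hi ⟨hroot, by omega⟩)
    rw [hj0, hdepth0] at this
    omega


lemma fiber_sum {V : Type*} [DecidableEq V] (root : V) (par : V → V) (depth : V → ℕ)
    (hdepth0 : depth root = 0)
    (hdepth : ∀ v, v ≠ root → depth v = depth (par v) + 1)
    (β : V → ℝ) (hβ : ∀ v, 0 < β v) (lam : V → ℂ) (k : ℕ) (f : V → ℂ) (u : V) :
    ∑' (v : {v : V // par^[k] v = u}), β v.1 * ‖(shiftMap root par lam)^[k] f v.1‖ ^ 2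
    = (∑' v : {v : V // par^[k] v = u ∧ depth v = depth u + k},
        ‖∏ j ∈ Finset.range k, lam (par^[j] v.1)‖ ^ 2 * β v.1 / β u) * (β u * ‖f u‖ ^ 2) := by
  have h1 : ∑' (v : {v : V // par^[k] v = u}), β v.1 * ‖(shiftMap root par lam)^[k] f v.1‖ ^ 2
      = ∑' v : V, Set.indicator {v | par^[k] v = u}
          (fun v => β v * ‖(shiftMap root par lam)^[k] f v‖ ^ 2) v :=
    tsum_subtype {v | par^[k] v = u} (fun v => β v * ‖(shiftMap root par lam)^[k] f v‖ ^ 2)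
  have h2 : ∑' (v : {v : V // par^[k] v = u ∧ depth v = depth u + k}),
        ‖∏ j ∈ Finset.range k, lam (par^[j] v.1)‖ ^ 2 * β v.1 / β u
      = ∑' v : V, Set.indicator {v | par^[k] v = u ∧ depth v = depth u + k}
          (fun v => ‖∏ j ∈ Finset.range k, lam (par^[j] v)‖ ^ 2 * β v / β u) v :=
    tsum_subtype {v | par^[k] v = u ∧ depth v = depth u + k}
      (fun v => ‖∏ j ∈ Finset.range k, lam (par^[j] v)‖ ^ 2 * β v / β u)
  rw [h1, h2, ← tsum_mul_right]
  congr 1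
  funext v
  by_cases hvu : par^[k] v = u
  · by_cases hd : depth v = depth u + k
    · have hnr : ∀ j < k, par^[j] v ≠ root := by
        rw [no_root_iff_depth root par depth hdepth0 hdepth, hvu]; exact hd
      rw [Set.indicator_of_mem (by exact hvu), Set.indicator_of_mem (by exact ⟨hvu, hd⟩)]
      rw [shift_iter_apply, if_pos hnr, hvu]
      rw [norm_mul, mul_pow]
      have hu0 : β u ≠ 0 := (hβ u).ne'
      field_simp
    · have hnr : ¬ ∀ j < k, par^[j] v ≠ root := by
        rw [no_root_iff_depth root par depth hdepth0 hdepth, hvu]; exact hd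
      rw [Set.indicator_of_mem (by exact hvu),
        Set.indicator_of_notMem (by simp only [Set.mem_setOf_eq]; tauto)]
      rw [shift_iter_apply, if_neg hnr]
      simp
  · rw [Set.indicator_of_notMem (by exact hvu),
      Set.indicator_of_notMem (by simp only [Set.mem_setOf_eq]; tauto)]
    simp


/-- if S_λ is bounded then ‖S_λ^k‖² = sup_u ∑_{v ∈ Chi^⟨k⟩(u)} |λ_{u|v}|² β_v/β_u. -/
theorem stmt1 {V : Type*} [Countable V] [Infinite V] [DecidableEq V]
    (root : V) (par : V → V) (depth : V → ℕ)
    (hdepth0 : depth root = 0)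
    (hdepth : ∀ v, v ≠ root → depth v = depth (par v) + 1)
    (hreach : ∀ v, par^[depth v] v = root)
    (β : V → ℝ) (hβ : ∀ v, 0 < β v)
    (lam : V → ℂ)
    (hbdd : ∃ C : ℝ, ∀ f : V → ℂ, MemL2 β f →
        MemL2 β (shiftMap root par lam f) ∧
        wnormSq β (shiftMap root par lam f) ≤ C * wnormSq β f)
    (k : ℕ) :
    sInf {C : ℝ | 0 ≤ C ∧ ∀ f : V → ℂ, MemL2 β f →
        wnormSq β ((shiftMap root par lam)^[k] f) ≤ C * wnormSq β f}
    = ⨆ u : V, ∑' v : {v : V // par^[k] v = u ∧ depth v = depth u + k},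
        ‖∏ j ∈ Finset.range k, lam (par^[j] v.1)‖ ^ 2 * β v.1 / β u := by
  classical
  obtain ⟨C, hC⟩ := hbdd
  set Λ := shiftMap root par lam with hΛ
  set c : V → ℝ := fun u => ∑' v : {v : V // par^[k] v = u ∧ depth v = depth u + k},
      ‖∏ j ∈ Finset.range k, lam (par^[j] v.1)‖ ^ 2 * β v.1 / β u with hc
  -- basic positivity
  have hwn : ∀ f : V → ℂ, 0 ≤ wnormSq β f := fun f =>
    tsum_nonneg fun v => mul_nonneg (hβ v).le (by positivity)
  have hc0 : ∀ u, 0 ≤ c u := fun u =>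
    tsum_nonneg fun v => by
      have := (hβ v.1).le; have := (hβ u).le; positivity
  -- basis vectors
  have heMem : ∀ u : V, MemL2 β (eVec u) := by
    intro u
    apply summable_of_ne_finset_zero (s := {u})
    intro v hv
    simp only [Finset.mem_singleton] at hv
    simp [eVec, hv]
  have heNorm : ∀ u : V, wnormSq β (eVec u) = β u := by
    intro u
    rw [wnormSq, tsum_eq_single u]
    · simp [eVec]
    · intro v hv; simp [eVec, hv]
  have hC0 : 0 ≤ C := by
    have h := (hC (eVec root) (heMem root)).2
    rw [heNorm root] at h
    nlinarith [hwn (shiftMap root par lam (eVec root)), hβ root]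
  -- iterates are bounded
  have hIter : ∀ (n : ℕ) (f : V → ℂ), MemL2 β f →
      MemL2 β (Λ^[n] f) ∧ wnormSq β (Λ^[n] f) ≤ C ^ n * wnormSq β f := by
    intro n
    induction n with
    | zero => intro f hf; simpa using hf
    | succ n ih =>
      intro f hf
      obtain ⟨h1, h2⟩ := ih f hf
      obtain ⟨h3, h4⟩ := hC _ h1
      rw [Function.iterate_succ_apply']
      refine ⟨h3, le_trans h4 ?_⟩
      rw [pow_succ, mul_comm (C ^ n) C, mul_assoc]
      exact mul_le_mul_of_nonneg_left h2 hC0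
  -- the key identity
  have key : ∀ f : V → ℂ, MemL2 β f →
      wnormSq β (Λ^[k] f) = ∑' u, c u * (β u * ‖f u‖ ^ 2) ∧
      Summable (fun u => c u * (β u * ‖f u‖ ^ 2)) := by
    intro f hf
    have hS : Summable fun v => β v * ‖Λ^[k] f v‖ ^ 2 := (hIter k f hf).1
    have hSig : Summable ((fun v => β v * ‖Λ^[k] f v‖ ^ 2) ∘
        (Equiv.sigmaFiberEquiv (fun v : V => par^[k] v))) :=
      (Equiv.summable_iff _).mpr hS
    have hfib : ∀ u, (∑' (v : {v : V // par^[k] v = u}), β v.1 * ‖Λ^[k] f v.1‖ ^ 2)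
        = c u * (β u * ‖f u‖ ^ 2) := fun u =>
      fiber_sum root par depth hdepth0 hdepth β hβ lam k f u
    have htsum : wnormSq β (Λ^[k] f) = ∑' u, ∑' (v : {v : V // par^[k] v = u}),
        β v.1 * ‖Λ^[k] f v.1‖ ^ 2 := by
      rw [wnormSq, ← (Equiv.sigmaFiberEquiv (fun v => par^[k] v)).tsum_eq
        (fun v => β v * ‖Λ^[k] f v‖ ^ 2)]
      exact Summable.tsum_sigma' (fun b => hSig.sigma_factor b) hSig
    have hOuter : Summable (fun u => ∑' (v : {v : V // par^[k] v = u}),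
        β v.1 * ‖Λ^[k] f v.1‖ ^ 2) := hSig.sigma
    constructor
    · rw [htsum]; exact tsum_congr hfib
    · have : (fun u => ∑' (v : {v : V // par^[k] v = u}), β v.1 * ‖Λ^[k] f v.1‖ ^ 2)
          = fun u => c u * (β u * ‖f u‖ ^ 2) := funext hfib
      rwa [this] at hOuter
  -- testing against basis vectors
  have hTest : ∀ D : ℝ, (∀ f : V → ℂ, MemL2 β f → wnormSq β (Λ^[k] f) ≤ D * wnormSq β f) →
      ∀ u, c u ≤ D := by
    intro D hD u
    have h := hD (eVec u) (heMem u)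
    rw [heNorm u, (key (eVec u) (heMem u)).1, tsum_eq_single u] at h
    · have he1 : (eVec u : V → ℂ) u = 1 := by simp [eVec]
      rw [he1, norm_one, one_pow, mul_one] at h
      exact le_of_mul_le_mul_right h (hβ u)
    · intro v hv; simp [eVec, hv]
  have hmemCk : (0:ℝ) ≤ C ^ k ∧ ∀ f : V → ℂ, MemL2 β f →
      wnormSq β (Λ^[k] f) ≤ C ^ k * wnormSq β f :=
    ⟨pow_nonneg hC0 k, fun f hf => (hIter k f hf).2⟩
  have bddc : BddAbove (Set.range c) :=
    ⟨C ^ k, by rintro x ⟨u, rfl⟩; exact hTest _ hmemCk.2 u⟩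
  have hsup0 : 0 ≤ ⨆ u, c u :=
    le_trans (hc0 (Classical.arbitrary V)) (le_ciSup bddc _)
  have hsupMem : 0 ≤ (⨆ u, c u) ∧ ∀ f : V → ℂ, MemL2 β f →
      wnormSq β (Λ^[k] f) ≤ (⨆ u, c u) * wnormSq β f := by
    refine ⟨hsup0, fun f hf => ?_⟩
    obtain ⟨hk1, hk2⟩ := key f hf
    rw [hk1, wnormSq, ← tsum_mul_left]
    refine Summable.tsum_le_tsum (fun u => ?_) hk2 (hf.mul_left _)
    exact mul_le_mul_of_nonneg_right (le_ciSup bddc u)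
      (mul_nonneg (hβ u).le (by positivity))
  apply le_antisymm
  · exact csInf_le ⟨0, fun x hx => hx.1⟩ hsupMem
  · refine le_csInf ⟨_, hsupMem⟩ fun D hD => ciSup_le fun u => hTest D hD.2 u

end
end

section
/- For the indicator symbol χ_{{n}} : ℕ₀ → ℂ (equal to 1 at n and 0 elsewhere), the multiplication operator M_{χ_{{n}}} equals S_λ^n, the n-th power of the weighted shift, for every n ∈ ℕ₀, provided S_λ is bounded on ℓ²(β). -/
open scoped ENNReal
open Filter

noncomputable section

lemma depth_iter {V : Type*} (root : V) (par : V → V) (depth : V → ℕ)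
    (hdepth0 : depth root = 0)
    (hdepth : ∀ v, v ≠ root → depth v = depth (par v) + 1) :
    ∀ (n : ℕ) (v : V), n ≤ depth v → depth (par^[n] v) = depth v - n := by
  intro n
  induction n with
  | zero => intro v _; simp
  | succ n ih =>
    intro v hn
    have hvr : v ≠ root := by
      intro h; rw [h, hdepth0] at hn; omega
    have hp := hdepth v hvr
    rw [Function.iterate_succ_apply, ih (par v) (by omega)]
    omega

lemma iter_eq_of_le {V : Type*} [DecidableEq V]
    (root : V) (par : V → V) (depth : V → ℕ)
    (hdepth0 : depth root = 0)
    (hdepth : ∀ v, v ≠ root → depth v = depth (par v) + 1)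
    (lam : V → ℝ) :
    ∀ (n : ℕ) (v : V) (f : V → ℂ), n ≤ depth v →
      (shiftMapR root par lam)^[n] f v
        = ((lamProd par lam n v : ℝ) : ℂ) * f (par^[n] v) := by
  intro n
  induction n with
  | zero => intro v f _; simp [lamProd]
  | succ n ih =>
    intro v f hn
    have hvr : v ≠ root := by
      intro h; rw [h, hdepth0] at hn; omega
    have hd : n ≤ depth (par v) := by
      have := hdepth v hvr; omega
    rw [Function.iterate_succ_apply]
    have : shiftMapR root par lam f v = ((lam v : ℝ) : ℂ) * f (par v) := by
      simp [shiftMapR, hvr]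
    calc (shiftMapR root par lam)^[n] (shiftMapR root par lam f) v
        = ((lamProd par lam n v : ℝ) : ℂ) * (shiftMapR root par lam f) (par^[n] v) :=
          ih v _ (by
            have := hdepth v hvr; omega)
      _ = ((lamProd par lam (n+1) v : ℝ) : ℂ) * f (par^[n+1] v) := by
          have hnr : par^[n] v ≠ root := by
            intro h
            have := depth_iter root par depth hdepth0 hdepth n v (by omega)
            rw [h, hdepth0] at this
            omega
          simp only [shiftMapR, hnr, if_neg, Function.iterate_succ_apply']
          push_cast [lamProd, Finset.prod_range_succ]
          ring

lemma iter_eq_of_gt {V : Type*} [DecidableEq V]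
    (root : V) (par : V → V) (depth : V → ℕ)
    (hdepth0 : depth root = 0)
    (hdepth : ∀ v, v ≠ root → depth v = depth (par v) + 1)
    (lam : V → ℝ) :
    ∀ (n : ℕ) (v : V) (f : V → ℂ), depth v < n →
      (shiftMapR root par lam)^[n] f v = 0 := by
  intro n
  induction n with
  | zero => intro v f h; omega
  | succ n ih =>
    intro v f h
    rw [Function.iterate_succ_apply']
    by_cases hvr : v = root
    · simp [shiftMapR, hvr]
    · have hp := hdepth v hvr
      simp [shiftMapR, hvr, ih (par v) f (by omega)]

/-- M_{χ_{n}} = S_λ^n for every n ∈ ℕ₀, provided S_λ is bounded. -/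
theorem stmt5 {V : Type*} [Countable V] [Infinite V] [DecidableEq V]
    (root : V) (par : V → V) (depth : V → ℕ)
    (hdepth0 : depth root = 0)
    (hdepth : ∀ v, v ≠ root → depth v = depth (par v) + 1)
    (hreach : ∀ v, par^[depth v] v = root)
    (hleafless : ∀ u : V, ∃ v : V, v ≠ root ∧ par v = u)
    (β : V → ℝ) (hβ : ∀ v, 0 < β v)
    (lam : V → ℝ) (hlam : ∀ v, v ≠ root → 0 < lam v)
    (hbdd : ∃ C : ℝ, ∀ f : V → ℂ, MemL2 β f →
        MemL2 β (shiftMapR root par lam f) ∧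
        wnormSq β (shiftMapR root par lam f) ≤ C * wnormSq β f)
    (n : ℕ) :
    ∀ f : V → ℂ,
      gammaMap par depth lam (fun k => if k = n then 1 else 0) f
        = (shiftMapR root par lam)^[n] f := by
  intro f
  funext v
  by_cases hn : n ≤ depth v
  · rw [iter_eq_of_le root par depth hdepth0 hdepth lam n v f hn]
    unfold gammaMap
    rw [Finset.sum_eq_single n]
    · simp
    · intro k _ hk; simp [hk]
    · intro h; exact absurd (Finset.mem_range.mpr (by omega)) h
  · rw [iter_eq_of_gt root par depth hdepth0 hdepth lam n v f (by omega)]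
    unfold gammaMap
    apply Finset.sum_eq_zero
    intro k hk
    have : k ≠ n := by simp at hk; omega
    simp [this]
end
end

section
/- For any φ̂, ψ̂ : ℕ₀ → ℂ and any f : V → ℂ, the composition of the formal multiplication maps satisfies Γ_φ̂ (Γ_ψ̂ f) = Γ_{φ̂ * ψ̂} f, where (φ̂ * ψ̂)(k) = ∑_{j=0}^{k} φ̂(j) ψ̂(k−j) is the Cauchy product. Consequently, if M_φ̂ and M_ψ̂ are everywhere defined on ℓ²(β), then so is M_{φ̂*ψ̂} and M_φ̂ M_ψ̂ = M_{φ̂*ψ̂}. -/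
open scoped ENNReal
open Filter

noncomputable section

theorem lamProd_add' {V : Type*} (par : V → V) (lam : V → ℝ) (k j : ℕ) (v : V) :
    lamProd par lam (k + j) v = lamProd par lam k v * lamProd par lam j (par^[k] v) := by
  unfold lamProd
  rw [Finset.prod_range_add]
  congr 1
  refine Finset.prod_congr rfl fun i _ => ?_
  rw [add_comm k i, Function.iterate_add_apply]

/-- Γ_φ̂ (Γ_ψ̂ f) = Γ_{φ̂*ψ̂} f for all f, and consequently if M_φ̂ and
M_ψ̂ are everywhere defined then so is M_{φ̂*ψ̂}, and M_φ̂ M_ψ̂ = M_{φ̂*ψ̂}. -/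
theorem stmt6 {V : Type*} [Countable V] [Infinite V] [DecidableEq V]
    (root : V) (par : V → V) (depth : V → ℕ)
    (hdepth0 : depth root = 0)
    (hdepth : ∀ v, v ≠ root → depth v = depth (par v) + 1)
    (hreach : ∀ v, par^[depth v] v = root)
    (hleafless : ∀ u : V, ∃ v : V, v ≠ root ∧ par v = u)
    (β : V → ℝ) (hβ : ∀ v, 0 < β v)
    (lam : V → ℝ) (hlam : ∀ v, v ≠ root → 0 < lam v)
    (φ ψ : ℕ → ℂ) :
    (∀ f : V → ℂ,
      gammaMap par depth lam φ (gammaMap par depth lam ψ f)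
        = gammaMap par depth lam (cauchyMul φ ψ) f)
    ∧ (Mult par depth β lam φ → Mult par depth β lam ψ →
        Mult par depth β lam (cauchyMul φ ψ)) := by
  have depth_it : ∀ k v, k ≤ depth v → depth (par^[k] v) = depth v - k := by
    intro k
    induction k with
    | zero => intro v _; simp
    | succ k ih =>
      intro v hk
      have hv : v ≠ root := by
        intro h; rw [h, hdepth0] at hk; omega
      have hd := hdepth v hv
      rw [Function.iterate_succ_apply, ih (par v) (by omega)]
      omega
  have key : ∀ f : V → ℂ,
      gammaMap par depth lam φ (gammaMap par depth lam ψ f)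
        = gammaMap par depth lam (cauchyMul φ ψ) f := by
    intro f
    funext v
    unfold gammaMap cauchyMul
    set d := depth v with hdv
    have step1 :
        (∑ k ∈ Finset.range (d + 1),
          ((lamProd par lam k v : ℝ) : ℂ) * φ k *
            (∑ j ∈ Finset.range (depth (par^[k] v) + 1),
              ((lamProd par lam j (par^[k] v) : ℝ) : ℂ) * ψ j * f (par^[j] (par^[k] v))))
        = ∑ k ∈ Finset.range (d + 1), ∑ m ∈ Finset.Ico k (d + 1),
            ((lamProd par lam m v : ℝ) : ℂ) * (φ k * ψ (m - k)) * f (par^[m] v) := by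
      refine Finset.sum_congr rfl fun k hk => ?_
      have hk' : k ≤ d := by simpa using Nat.lt_succ_iff.mp (Finset.mem_range.mp hk)
      rw [depth_it k v hk']
      rw [Finset.sum_Ico_eq_sum_range]
      have hrange : d + 1 - k = d - k + 1 := by omega
      rw [hrange, Finset.mul_sum]
      refine Finset.sum_congr rfl fun j _ => ?_
      rw [lamProd_add' par lam k j v, ← Function.iterate_add_apply]
      have : k + j - k = j := by omega
      rw [this]
      push_cast
      ring_nf
    rw [step1, Finset.range_eq_Ico, Finset.sum_Ico_Ico_comm]
    refine Finset.sum_congr rfl fun m _ => ?_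
    simp only [Finset.mul_sum, Finset.sum_mul, Finset.range_eq_Ico]
  refine ⟨key, fun hφ hψ f hf => ?_⟩
  rw [← key f]
  exact hφ _ (hψ f hf)
end
end

section
/- If φ̂ ∈ M(T_β, λ) (i.e., M_φ̂ is everywhere defined and bounded) and S_λ ∈ B(ℓ²(β)), then |φ̂(k)| ≤ ‖M_φ̂‖ / ‖S_λ^k‖ for every k ∈ ℕ₀. Consequently, for every w ∈ ℂ with |w| < r(S_λ) (the spectral radius of S_λ), the series ∑_{n≥0} φ̂(n) wⁿ converges absolutely. -/
open scoped ENNReal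
open Filter

noncomputable section

set_option linter.unusedSectionVars false
namespace Stmt8Aux

variable {V : Type*} [DecidableEq V]

lemma lamProd_succ (par : V → V) (lam : V → ℝ) (k : ℕ) (v : V) :
    lamProd par lam (k + 1) v = lam v * lamProd par lam k (par v) := by
  unfold lamProd
  rw [Finset.prod_range_succ']
  simp only [Function.iterate_succ_apply, Function.iterate_zero_apply]
  ring

lemma shift_iter_apply (root : V) (par : V → V) (depth : V → ℕ)
    (hdepth0 : depth root = 0) (hdepth : ∀ v, v ≠ root → depth v = depth (par v) + 1)
    (lam : V → ℝ) (k : ℕ) (f : V → ℂ) (v : V) :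
    (shiftMapR root par lam)^[k] f v =
      if k ≤ depth v then ((lamProd par lam k v : ℝ) : ℂ) * f (par^[k] v) else 0 := by
  induction k generalizing v with
  | zero => simp [lamProd]
  | succ k ih =>
    rw [Function.iterate_succ_apply']
    by_cases hv : v = root
    · subst hv
      simp [shiftMapR, hdepth0]
    · have hd : depth v = depth (par v) + 1 := hdepth v hv
      simp only [shiftMapR, if_neg hv, ih (par v)]
      by_cases hk : k ≤ depth (par v)
      · rw [if_pos hk, if_pos (by omega)]
        rw [lamProd_succ]
        push_cast
        rw [Function.iterate_succ_apply]
        ring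
      · rw [if_neg hk, if_neg (by omega), mul_zero]

lemma eq_root_of_depth_eq_zero (root : V) (par : V → V) (depth : V → ℕ)
    (hdepth : ∀ v, v ≠ root → depth v = depth (par v) + 1)
    {u : V} (hu : depth u = 0) : u = root := by
  by_contra h
  have := hdepth u h
  omega

lemma depth_iter (root : V) (par : V → V) (depth : V → ℕ)
    (hdepth0 : depth root = 0) (hdepth : ∀ v, v ≠ root → depth v = depth (par v) + 1)
    (k : ℕ) : ∀ v : V, k ≤ depth v → depth (par^[k] v) = depth v - k := by
  induction k with
  | zero => intro v _; simp
  | succ k ih =>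
    intro v hk
    have hv : v ≠ root := by
      intro h; rw [h, hdepth0] at hk; omega
    have hd : depth v = depth (par v) + 1 := hdepth v hv
    rw [Function.iterate_succ_apply, ih (par v) (by omega)]
    omega

lemma memL2_eVec (β : V → ℝ) (u : V) : MemL2 β (eVec u) := by
  apply summable_of_ne_finset_zero (s := {u})
  intro v hv
  simp only [Finset.mem_singleton] at hv
  simp [eVec, hv]

lemma wnormSq_eVec (β : V → ℝ) (u : V) : wnormSq β (eVec u) = β u := by
  unfold wnormSq
  rw [tsum_eq_single u]
  · simp [eVec]
  · intro v hv; simp [eVec, hv]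

lemma wnormSq_nonneg (β : V → ℝ) (hβ : ∀ v, 0 < β v) (f : V → ℂ) : 0 ≤ wnormSq β f :=
  tsum_nonneg fun v => mul_nonneg (hβ v).le (by positivity)

lemma memL2_shift_iter (root : V) (par : V → V) (β lam : V → ℝ)
    (hbdd : ∀ f : V → ℂ, MemL2 β f → MemL2 β (shiftMapR root par lam f))
    (k : ℕ) (f : V → ℂ) (hf : MemL2 β f) : MemL2 β ((shiftMapR root par lam)^[k] f) := by
  induction k with
  | zero => exact hf
  | succ k ih =>
    rw [Function.iterate_succ_apply']
    exact hbdd _ ih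

lemma opNorm_nonneg (β : V → ℝ) (T : (V → ℂ) → (V → ℂ)) : 0 ≤ opNorm β T :=
  Real.sInf_nonneg fun _ hx => hx.1

end Stmt8Aux

namespace Stmt8Aux
section
variable {V : Type*} [DecidableEq V]

lemma gamma_eVec_eq (root : V) (par : V → V) (depth : V → ℕ)
    (hdepth0 : depth root = 0) (hdepth : ∀ v, v ≠ root → depth v = depth (par v) + 1)
    (lam : V → ℝ) (φ : ℕ → ℂ)
    (k : ℕ) (u v : V) (hk : k ≤ depth v) (hv : par^[k] v = u) :
    gammaMap par depth lam φ (eVec u) v = ((lamProd par lam k v : ℝ) : ℂ) * φ k := by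
  unfold gammaMap
  rw [Finset.sum_eq_single_of_mem k (Finset.mem_range.2 (by omega))]
  · simp [eVec, hv]
  · intro j hj hjk
    have hj' : j ≤ depth v := by
      have := Finset.mem_range.1 hj; omega
    have hne : par^[j] v ≠ u := by
      intro h
      have d1 := depth_iter root par depth hdepth0 hdepth j v hj'
      have d2 := depth_iter root par depth hdepth0 hdepth k v hk
      rw [h] at d1; rw [hv] at d2
      omega
    simp [eVec, hne]

lemma pointwise_le (root : V) (par : V → V) (depth : V → ℕ)
    (hdepth0 : depth root = 0) (hdepth : ∀ v, v ≠ root → depth v = depth (par v) + 1)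
    (β lam : V → ℝ) (hβ : ∀ v, 0 < β v) (φ : ℕ → ℂ)
    (k : ℕ) (u v : V) :
    ‖φ k‖ ^ 2 * (β v * ‖(shiftMapR root par lam)^[k] (eVec u) v‖ ^ 2)
      ≤ β v * ‖gammaMap par depth lam φ (eVec u) v‖ ^ 2 := by
  by_cases h : k ≤ depth v ∧ par^[k] v = u
  · obtain ⟨hk, hu⟩ := h
    rw [shift_iter_apply root par depth hdepth0 hdepth lam k, if_pos hk,
      gamma_eVec_eq root par depth hdepth0 hdepth lam φ k u v hk hu]
    have he : eVec u (par^[k] v) = 1 := by simp [eVec, hu]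
    rw [he, mul_one, norm_mul]
    exact le_of_eq (by ring)
  · have hz : (shiftMapR root par lam)^[k] (eVec u) v = 0 := by
      rw [shift_iter_apply root par depth hdepth0 hdepth lam k]
      split
      · rename_i hk
        have hne : par^[k] v ≠ u := fun hc => h ⟨hk, hc⟩
        simp [eVec, hne]
      · rfl
    rw [hz]
    simp only [norm_zero]
    have h1 : 0 ≤ β v * ‖gammaMap par depth lam φ (eVec u) v‖ ^ 2 :=
      mul_nonneg (hβ v).le (by positivity)
    nlinarith [sq_nonneg (‖φ k‖)]

lemma keyIneq (root : V) (par : V → V) (depth : V → ℕ)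
    (hdepth0 : depth root = 0) (hdepth : ∀ v, v ≠ root → depth v = depth (par v) + 1)
    (β lam : V → ℝ) (hβ : ∀ v, 0 < β v) (φ : ℕ → ℂ)
    (hS : ∀ f : V → ℂ, MemL2 β f → MemL2 β (shiftMapR root par lam f))
    (hφ : Mult par depth β lam φ) (C : ℝ)
    (hC : ∀ f : V → ℂ, MemL2 β f →
      wnormSq β (gammaMap par depth lam φ f) ≤ C ^ 2 * wnormSq β f)
    (k : ℕ) (u : V) :
    ‖φ k‖ ^ 2 * wnormSq β ((shiftMapR root par lam)^[k] (eVec u)) ≤ C ^ 2 * β u := by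
  have hmem : MemL2 β ((shiftMapR root par lam)^[k] (eVec u)) :=
    memL2_shift_iter root par β lam hS k _ (memL2_eVec β u)
  have hΓ : MemL2 β (gammaMap par depth lam φ (eVec u)) := hφ _ (memL2_eVec β u)
  have h1 : ‖φ k‖ ^ 2 * wnormSq β ((shiftMapR root par lam)^[k] (eVec u))
      = ∑' v, ‖φ k‖ ^ 2 * (β v * ‖(shiftMapR root par lam)^[k] (eVec u) v‖ ^ 2) := by
    rw [tsum_mul_left]; rfl
  rw [h1]
  calc ∑' v, ‖φ k‖ ^ 2 * (β v * ‖(shiftMapR root par lam)^[k] (eVec u) v‖ ^ 2)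
      ≤ ∑' v, β v * ‖gammaMap par depth lam φ (eVec u) v‖ ^ 2 :=
        Summable.tsum_le_tsum (pointwise_le root par depth hdepth0 hdepth β lam hβ φ k u)
          (hmem.mul_left _) hΓ
    _ ≤ C ^ 2 * wnormSq β (eVec u) := hC _ (memL2_eVec β u)
    _ = C ^ 2 * β u := by rw [wnormSq_eVec]

end
end Stmt8Aux

namespace Stmt8Aux
section
variable {V : Type*} [DecidableEq V]

lemma shift_iter_bound (root : V) (par : V → V) (depth : V → ℕ)
    (hdepth0 : depth root = 0) (hdepth : ∀ v, v ≠ root → depth v = depth (par v) + 1)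
    (β lam : V → ℝ) (hβ : ∀ v, 0 < β v)
    (hS : ∀ f : V → ℂ, MemL2 β f → MemL2 β (shiftMapR root par lam f))
    (k : ℕ) (D : ℝ)
    (hu : ∀ u : V, wnormSq β ((shiftMapR root par lam)^[k] (eVec u)) ≤ D ^ 2 * β u)
    (f : V → ℂ) (hf : MemL2 β f) :
    wnormSq β ((shiftMapR root par lam)^[k] f) ≤ D ^ 2 * wnormSq β f := by
  set a : V → ℝ := fun v => if k ≤ depth v then β v * lamProd par lam k v ^ 2 else 0 with ha
  have ha0 : ∀ v, 0 ≤ a v := by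
    intro v; rw [ha]; dsimp only
    split
    · exact mul_nonneg (hβ v).le (sq_nonneg _)
    · exact le_rfl
  have hterm : ∀ (g : V → ℂ) (v : V),
      β v * ‖(shiftMapR root par lam)^[k] g v‖ ^ 2 = a v * ‖g (par^[k] v)‖ ^ 2 := by
    intro g v
    rw [shift_iter_apply root par depth hdepth0 hdepth lam k, ha]
    dsimp only
    split
    · rw [norm_mul, Complex.norm_real, Real.norm_eq_abs, mul_pow, sq_abs]; ring
    · simp
  have hterm_e : ∀ u v : V,
      β v * ‖(shiftMapR root par lam)^[k] (eVec u) v‖ ^ 2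
        = if par^[k] v = u then a v else 0 := by
    intro u v
    rw [hterm]
    by_cases h : par^[k] v = u
    · simp [eVec, h]
    · simp [eVec, h]
  -- fiber sums
  have fiber_sum : ∀ u : V,
      (∑' v : {v : V // par^[k] v = u}, ENNReal.ofReal (a v.1))
        = ENNReal.ofReal (wnormSq β ((shiftMapR root par lam)^[k] (eVec u))) := by
    intro u
    have hmem : MemL2 β ((shiftMapR root par lam)^[k] (eVec u)) :=
      memL2_shift_iter root par β lam hS k _ (memL2_eVec β u)
    have h1 : ENNReal.ofReal (wnormSq β ((shiftMapR root par lam)^[k] (eVec u)))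
        = ∑' v, ENNReal.ofReal (β v * ‖(shiftMapR root par lam)^[k] (eVec u) v‖ ^ 2) :=
      ENNReal.ofReal_tsum_of_nonneg (fun v => mul_nonneg (hβ v).le (by positivity)) hmem
    rw [h1]
    rw [show (∑' v : {v : V // par^[k] v = u}, ENNReal.ofReal (a v.1))
        = ∑' v : ({v : V | par^[k] v = u} : Set V), ENNReal.ofReal (a v.1) from rfl,
      tsum_subtype ({v : V | par^[k] v = u}) (fun v => ENNReal.ofReal (a v))]
    refine tsum_congr fun v => ?_
    rw [hterm_e]
    by_cases h : par^[k] v = u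
    · rw [if_pos h, Set.indicator_of_mem (by exact h)]
    · rw [if_neg h, Set.indicator_of_notMem (by exact h), ENNReal.ofReal_zero]
  have key : (∑' v, ENNReal.ofReal (β v * ‖(shiftMapR root par lam)^[k] f v‖ ^ 2))
      ≤ ENNReal.ofReal (D ^ 2 * wnormSq β f) := by
    calc (∑' v, ENNReal.ofReal (β v * ‖(shiftMapR root par lam)^[k] f v‖ ^ 2))
        = ∑' v, ENNReal.ofReal (a v) * ENNReal.ofReal (‖f (par^[k] v)‖ ^ 2) := by
          refine tsum_congr fun v => ?_
          rw [hterm, ENNReal.ofReal_mul (ha0 v)]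
      _ = ∑' (u : V) (v : {v : V // par^[k] v = u}),
            ENNReal.ofReal (a v.1) * ENNReal.ofReal (‖f (par^[k] v.1)‖ ^ 2) := by
          rw [← (Equiv.sigmaFiberEquiv (fun v : V => par^[k] v)).tsum_eq, ENNReal.tsum_sigma']
          rfl
      _ = ∑' u : V, ENNReal.ofReal (wnormSq β ((shiftMapR root par lam)^[k] (eVec u)))
            * ENNReal.ofReal (‖f u‖ ^ 2) := by
          refine tsum_congr fun u => ?_
          have h2 : ∀ v : {v : V // par^[k] v = u},
              ENNReal.ofReal (a v.1) * ENNReal.ofReal (‖f (par^[k] v.1)‖ ^ 2)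
                = ENNReal.ofReal (a v.1) * ENNReal.ofReal (‖f u‖ ^ 2) := by
            intro v; rw [v.2]
          rw [tsum_congr h2, ENNReal.tsum_mul_right, fiber_sum u]
      _ ≤ ∑' u : V, ENNReal.ofReal (D ^ 2 * β u) * ENNReal.ofReal (‖f u‖ ^ 2) :=
          ENNReal.tsum_le_tsum fun u =>
            mul_le_mul_left (ENNReal.ofReal_le_ofReal (hu u)) _
      _ = ∑' u : V, ENNReal.ofReal (D ^ 2 * (β u * ‖f u‖ ^ 2)) := by
          refine tsum_congr fun u => ?_
          rw [← ENNReal.ofReal_mul (mul_nonneg (sq_nonneg D) (hβ u).le), mul_assoc]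
      _ = ENNReal.ofReal (∑' u, D ^ 2 * (β u * ‖f u‖ ^ 2)) :=
          (ENNReal.ofReal_tsum_of_nonneg
            (fun u => mul_nonneg (sq_nonneg _) (mul_nonneg (hβ u).le (by positivity)))
            (hf.mul_left _)).symm
      _ = ENNReal.ofReal (D ^ 2 * wnormSq β f) := by rw [tsum_mul_left]; rfl
  -- summability of the LHS family
  have hsummable : Summable fun v => β v * ‖(shiftMapR root par lam)^[k] f v‖ ^ 2 := by
    have hne : (∑' v, ENNReal.ofReal (β v * ‖(shiftMapR root par lam)^[k] f v‖ ^ 2)) ≠ ⊤ :=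
      (lt_of_le_of_lt key ENNReal.ofReal_lt_top).ne
    have h2 : Summable fun v => Real.toNNReal (β v * ‖(shiftMapR root par lam)^[k] f v‖ ^ 2) :=
      ENNReal.tsum_coe_ne_top_iff_summable.1 hne
    have h3 := NNReal.summable_coe.2 h2
    refine h3.congr fun v => ?_
    exact Real.coe_toNNReal _ (mul_nonneg (hβ v).le (by positivity))
  have h4 : ENNReal.ofReal (wnormSq β ((shiftMapR root par lam)^[k] f))
      ≤ ENNReal.ofReal (D ^ 2 * wnormSq β f) := by
    rw [show wnormSq β ((shiftMapR root par lam)^[k] f)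
        = ∑' v, β v * ‖(shiftMapR root par lam)^[k] f v‖ ^ 2 from rfl,
      ENNReal.ofReal_tsum_of_nonneg (fun v => mul_nonneg (hβ v).le (by positivity)) hsummable]
    exact key
  exact (ENNReal.ofReal_le_ofReal_iff
    (mul_nonneg (sq_nonneg _) (wnormSq_nonneg β hβ f))).1 h4

end
end Stmt8Aux

namespace Stmt8Aux
section
variable {V : Type*} [DecidableEq V]

lemma gamma_bound (root : V) (par : V → V) (depth : V → ℕ) (β lam : V → ℝ)
    (hβ : ∀ v, 0 < β v) (φ : ℕ → ℂ) (hφ : Mult par depth β lam φ) :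
    ∃ C : ℝ, 0 ≤ C ∧ ∀ f : V → ℂ, MemL2 β f →
      wnormSq β (gammaMap par depth lam φ f) ≤ C ^ 2 * wnormSq β f := by
  classical
  haveI : Fact ((1:ℝ≥0∞) ≤ 2) := ⟨one_le_two⟩
  have h2eq : ((2:ℝ≥0∞)).toReal = 2 := by norm_num
  have h2pos : 0 < ((2:ℝ≥0∞)).toReal := by rw [h2eq]; norm_num
  set sb : V → ℝ := fun v => Real.sqrt (β v) with hsb
  have hsb0 : ∀ v, 0 < sb v := fun v => Real.sqrt_pos.2 (hβ v)
  have hsbne : ∀ v, ((sb v : ℝ) : ℂ) ≠ 0 := fun v => by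
    exact_mod_cast Complex.ofReal_ne_zero.2 (hsb0 v).ne'
  have hpow : ∀ x : ℝ, 0 ≤ x → x ^ ((2:ℝ≥0∞).toReal) = x ^ (2:ℕ) := by
    intro x hx
    rw [show ((2:ℝ≥0∞).toReal) = ((2:ℕ):ℝ) by rw [h2eq]; norm_num, Real.rpow_natCast]
  set σ : (V → ℂ) → (V → ℂ) := fun h v => ((sb v : ℝ) : ℂ) * h v with hσ
  set τ : (V → ℂ) → (V → ℂ) := fun g v => ((sb v : ℝ) : ℂ)⁻¹ * g v with hτ
  have hnorm : ∀ (h : V → ℂ) (v : V), ‖σ h v‖ ^ (2:ℕ) = β v * ‖h v‖ ^ 2 := by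
    intro h v
    rw [hσ]
    dsimp only
    rw [norm_mul, Complex.norm_real, Real.norm_eq_abs, abs_of_nonneg (Real.sqrt_nonneg _),
      mul_pow, Real.sq_sqrt (hβ v).le]
  have hτσ : ∀ h : V → ℂ, τ (σ h) = h := by
    intro h; funext v
    rw [hσ, hτ]
    dsimp only
    rw [← mul_assoc, inv_mul_cancel₀ (hsbne v), one_mul]
  have hστ : ∀ g : V → ℂ, σ (τ g) = g := by
    intro g; funext v
    rw [hσ, hτ]
    dsimp only
    rw [← mul_assoc, mul_inv_cancel₀ (hsbne v), one_mul]
  have hmem_iff : ∀ h : V → ℂ, Memℓp (σ h) 2 ↔ MemL2 β h := by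
    intro h
    rw [memℓp_gen_iff h2pos]
    have he : (fun v => ‖σ h v‖ ^ ((2:ℝ≥0∞).toReal)) = fun v => β v * ‖h v‖ ^ 2 := by
      funext v; rw [hpow _ (norm_nonneg _), hnorm]
    rw [he]
    exact Iff.rfl
  have hτmem : ∀ g : V → ℂ, Memℓp g 2 → MemL2 β (τ g) := by
    intro g hg
    have := (hmem_iff (τ g))
    rw [hστ g] at this
    exact this.1 hg
  have hTmem : ∀ g : lp (fun _ : V => ℂ) 2,
      Memℓp (σ (gammaMap par depth lam φ (τ (g : V → ℂ)))) 2 :=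
    fun g => (hmem_iff _).2 (hφ _ (hτmem _ (lp.memℓp g)))
  have hgamma_add : ∀ f g : V → ℂ, gammaMap par depth lam φ (f + g)
      = gammaMap par depth lam φ f + gammaMap par depth lam φ g := by
    intro f g; funext v
    simp only [gammaMap, Pi.add_apply, mul_add, Finset.sum_add_distrib]
  have hgamma_smul : ∀ (c : ℂ) (f : V → ℂ), gammaMap par depth lam φ (fun v => c * f v)
      = fun v => c * gammaMap par depth lam φ f v := by
    intro c f; funext v
    simp only [gammaMap, Finset.mul_sum]
    exact Finset.sum_congr rfl fun k _ => by ring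
  let Tfun : lp (fun _ : V => ℂ) 2 → lp (fun _ : V => ℂ) 2 :=
    fun g => ⟨σ (gammaMap par depth lam φ (τ (g : V → ℂ))), hTmem g⟩
  have hTfun_apply : ∀ (g : lp (fun _ : V => ℂ) 2) (v : V),
      (Tfun g : V → ℂ) v = σ (gammaMap par depth lam φ (τ (g : V → ℂ))) v := fun g v => rfl
  let Tlin : lp (fun _ : V => ℂ) 2 →ₗ[ℂ] lp (fun _ : V => ℂ) 2 :=
    { toFun := Tfun
      map_add' := by
        intro g h
        apply lp.ext
        funext v
        have hR : ((Tfun g + Tfun h : lp _ 2) : V → ℂ) v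
            = (Tfun g : V → ℂ) v + (Tfun h : V → ℂ) v := by
          rw [lp.coeFn_add]; rfl
        rw [hR, hTfun_apply, hTfun_apply]
        have h1 : τ ((g + h : lp _ 2) : V → ℂ) = τ (g : V → ℂ) + τ (h : V → ℂ) := by
          funext w
          rw [lp.coeFn_add]
          simp only [hτ, Pi.add_apply]
          ring
        show σ (gammaMap par depth lam φ (τ ((g + h : lp _ 2) : V → ℂ))) v = _
        rw [h1, hgamma_add]
        simp only [hσ, Pi.add_apply]
        ring
      map_smul' := by
        intro c g
        apply lp.ext
        funext v
        have hR : ((c • Tfun g : lp _ 2) : V → ℂ) v = c * (Tfun g : V → ℂ) v := by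
          rw [lp.coeFn_smul]; rfl
        show ((Tfun (c • g) : lp _ 2) : V → ℂ) v = ((c • Tfun g : lp _ 2) : V → ℂ) v
        rw [hR, hTfun_apply]
        have h1 : τ ((c • g : lp _ 2) : V → ℂ) = fun w => c * τ (g : V → ℂ) w := by
          funext w
          rw [lp.coeFn_smul]
          simp only [hτ, Pi.smul_apply, smul_eq_mul]
          ring
        show σ (gammaMap par depth lam φ (τ ((c • g : lp _ 2) : V → ℂ))) v = _
        rw [h1, hgamma_smul]
        simp only [hσ]
        ring }
  have hcoord : ∀ (u : ℕ → lp (fun _ : V => ℂ) 2) (x : lp (fun _ : V => ℂ) 2),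
      Filter.Tendsto u Filter.atTop (nhds x) → ∀ v : V,
      Filter.Tendsto (fun n => (u n : V → ℂ) v) Filter.atTop (nhds ((x : V → ℂ) v)) := by
    intro u x hu v
    rw [tendsto_iff_norm_sub_tendsto_zero]
    have h0 : Filter.Tendsto (fun n => ‖u n - x‖) Filter.atTop (nhds 0) :=
      tendsto_iff_norm_sub_tendsto_zero.1 hu
    refine squeeze_zero (fun n => norm_nonneg _) (fun n => ?_) h0
    have h1 := lp.norm_apply_le_norm (by norm_num : (2:ℝ≥0∞) ≠ 0) (u n - x) v
    have h2 : ((u n - x : lp _ 2) : V → ℂ) v = (u n : V → ℂ) v - (x : V → ℂ) v := by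
      rw [lp.coeFn_sub]; rfl
    rw [h2] at h1
    exact h1
  have hcont : Continuous Tlin := by
    apply Tlin.continuous_of_seq_closed_graph
    intro u x y hux huy
    apply lp.ext
    funext v
    have h1 : Filter.Tendsto (fun n => (Tlin (u n) : V → ℂ) v) Filter.atTop
        (nhds ((y : V → ℂ) v)) := hcoord (fun n => Tlin (u n)) y huy v
    have h2 : Filter.Tendsto (fun n => (Tlin (u n) : V → ℂ) v) Filter.atTop
        (nhds ((Tlin x : V → ℂ) v)) := by
      have hv : ∀ g : lp (fun _ : V => ℂ) 2, (Tlin g : V → ℂ) v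
          = ((sb v : ℝ) : ℂ) * ∑ k ∈ Finset.range (depth v + 1),
              ((lamProd par lam k v : ℝ) : ℂ) * φ k *
                (((sb (par^[k] v) : ℝ) : ℂ)⁻¹ * (g : V → ℂ) (par^[k] v)) := fun g => rfl
      simp only [hv]
      apply Filter.Tendsto.const_mul
      apply tendsto_finset_sum
      intro k _
      exact ((hcoord u x hux (par^[k] v)).const_mul _).const_mul _
    exact tendsto_nhds_unique h1 h2
  let T' : lp (fun _ : V => ℂ) 2 →L[ℂ] lp (fun _ : V => ℂ) 2 := ⟨Tlin, hcont⟩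
  refine ⟨‖T'‖, norm_nonneg _, ?_⟩
  intro f hf
  let g : lp (fun _ : V => ℂ) 2 := ⟨σ f, (hmem_iff f).2 hf⟩
  have hval : (T' g : V → ℂ) = σ (gammaMap par depth lam φ f) := by
    show σ (gammaMap par depth lam φ (τ (σ f))) = _
    rw [hτσ]
  have hnsq : ∀ x : lp (fun _ : V => ℂ) 2, ‖x‖ ^ (2:ℕ) = ∑' v, ‖(x : V → ℂ) v‖ ^ (2:ℕ) :=
    fun x =>
    calc ‖x‖ ^ (2:ℕ) = ‖x‖ ^ ((2:ℝ≥0∞).toReal) := (hpow _ (norm_nonneg _)).symm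
      _ = ∑' v, ‖(x : V → ℂ) v‖ ^ ((2:ℝ≥0∞).toReal) := lp.norm_rpow_eq_tsum h2pos x
      _ = ∑' v, ‖(x : V → ℂ) v‖ ^ (2:ℕ) := tsum_congr fun v => hpow _ (norm_nonneg _)
  have e1 : wnormSq β (gammaMap par depth lam φ f) = ‖T' g‖ ^ 2 := by
    rw [hnsq (T' g), hval]
    exact (tsum_congr fun v => hnorm _ v).symm
  have e2 : wnormSq β f = ‖g‖ ^ 2 := by
    rw [hnsq g]
    exact (tsum_congr fun v => hnorm _ v).symm
  have hle := T'.le_opNorm g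
  calc wnormSq β (gammaMap par depth lam φ f) = ‖T' g‖ ^ 2 := e1
    _ ≤ (‖T'‖ * ‖g‖) ^ 2 := pow_le_pow_left₀ (norm_nonneg _) hle 2
    _ = ‖T'‖ ^ 2 * ‖g‖ ^ 2 := by ring
    _ = ‖T'‖ ^ 2 * wnormSq β f := by rw [e2]

end
end Stmt8Aux


/-- for φ̂ ∈ M(T_β,λ), |φ̂(k)|·‖S_λ^k‖ ≤ ‖M_φ̂‖ for every k, and for every
w with |w| < r(S_λ) the series ∑ φ̂(n) wⁿ converges absolutely. -/
theorem stmt8 {V : Type*} [Countable V] [Infinite V] [DecidableEq V]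
    (root : V) (par : V → V) (depth : V → ℕ)
    (hdepth0 : depth root = 0)
    (hdepth : ∀ v, v ≠ root → depth v = depth (par v) + 1)
    (hreach : ∀ v, par^[depth v] v = root)
    (hleafless : ∀ u : V, ∃ v : V, v ≠ root ∧ par v = u)
    (β : V → ℝ) (hβ : ∀ v, 0 < β v)
    (lam : V → ℝ) (hlam : ∀ v, v ≠ root → 0 < lam v)
    (hbdd : ∃ C : ℝ, ∀ f : V → ℂ, MemL2 β f →
        MemL2 β (shiftMapR root par lam f) ∧
        wnormSq β (shiftMapR root par lam f) ≤ C * wnormSq β f)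
    (φ : ℕ → ℂ) (hφ : Mult par depth β lam φ) :
    (∀ k : ℕ, ‖φ k‖ * opNorm β (fun f => (shiftMapR root par lam)^[k] f)
        ≤ opNorm β (gammaMap par depth lam φ))
    ∧ (∀ w : ℂ, ‖w‖ < specRad root par β lam →
        Summable fun n : ℕ => ‖φ n * w ^ n‖) := by
  classical
  obtain ⟨C0, hC0⟩ := hbdd
  have hSmem : ∀ f : V → ℂ, MemL2 β f → MemL2 β (shiftMapR root par lam f) :=
    fun f hf => (hC0 f hf).1
  obtain ⟨M, hM0, hM⟩ := Stmt8Aux.gamma_bound root par depth β lam hβ φ hφ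
  have hΓne : Set.Nonempty {C : ℝ | 0 ≤ C ∧ ∀ f : V → ℂ, MemL2 β f →
      wnormSq β (gammaMap par depth lam φ f) ≤ C ^ 2 * wnormSq β f} := ⟨M, hM0, hM⟩
  have part1 : ∀ k : ℕ, ‖φ k‖ * opNorm β (fun f => (shiftMapR root par lam)^[k] f)
      ≤ opNorm β (gammaMap par depth lam φ) := by
    intro k
    by_cases hk : φ k = 0
    · rw [hk]
      simpa using Stmt8Aux.opNorm_nonneg β (gammaMap par depth lam φ)
    · have hknorm : 0 < ‖φ k‖ := norm_pos_iff.2 hk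
      refine le_csInf hΓne ?_
      rintro C ⟨hC0', hCb⟩
      have hmemset : (C / ‖φ k‖) ∈ {D : ℝ | 0 ≤ D ∧ ∀ f : V → ℂ, MemL2 β f →
          wnormSq β ((fun f => (shiftMapR root par lam)^[k] f) f)
            ≤ D ^ 2 * wnormSq β f} := by
        constructor
        · positivity
        · intro f hf
          refine Stmt8Aux.shift_iter_bound root par depth hdepth0 hdepth β lam hβ hSmem
            k _ ?_ f hf
          intro u
          have hki := Stmt8Aux.keyIneq root par depth hdepth0 hdepth β lam hβ φ hSmem hφ
            C hCb k u
          have h2 : wnormSq β ((shiftMapR root par lam)^[k] (eVec u))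
              ≤ C ^ 2 * β u / ‖φ k‖ ^ 2 := by
            rw [le_div_iff₀ (by positivity)]
            nlinarith [hki]
          calc wnormSq β ((shiftMapR root par lam)^[k] (eVec u))
              ≤ C ^ 2 * β u / ‖φ k‖ ^ 2 := h2
            _ = (C / ‖φ k‖) ^ 2 * β u := by rw [div_pow]; ring
      have hinf : opNorm β (fun f => (shiftMapR root par lam)^[k] f) ≤ C / ‖φ k‖ :=
        csInf_le ⟨0, fun x hx => hx.1⟩ hmemset
      calc ‖φ k‖ * opNorm β (fun f => (shiftMapR root par lam)^[k] f)
          ≤ ‖φ k‖ * (C / ‖φ k‖) := mul_le_mul_of_nonneg_left hinf (norm_nonneg _)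
        _ = C := by rw [mul_comm, div_mul_cancel₀ _ (ne_of_gt hknorm)]
  refine ⟨part1, ?_⟩
  -- part 2
  have hid : (1 : ℝ) ≤ opNorm β (fun f => (shiftMapR root par lam)^[0] f) := by
    refine le_csInf ⟨1, zero_le_one, fun f _ => by norm_num⟩ ?_
    rintro C ⟨hC0', hCb⟩
    obtain u := Classical.arbitrary V
    have hu := hCb (eVec u) (Stmt8Aux.memL2_eVec β u)
    simp only [Function.iterate_zero, id] at hu
    rw [Stmt8Aux.wnormSq_eVec] at hu
    have h1 : (1:ℝ) ≤ C ^ 2 := by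
      have := (mul_le_mul_iff_of_pos_right (hβ u)).1 (by linarith [hu] : 1 * β u ≤ C ^ 2 * β u)
      linarith
    nlinarith [h1, hC0']
  have hrad0 : 0 ≤ specRad root par β lam :=
    le_ciInf fun n => Real.rpow_nonneg (Stmt8Aux.opNorm_nonneg β _) _
  have hSpow : ∀ n : ℕ, specRad root par β lam ^ (n + 1)
      ≤ opNorm β (fun f => (shiftMapR root par lam)^[n + 1] f) := by
    intro n
    have hbb : BddBelow (Set.range fun n : ℕ =>
        (opNorm β (fun f => (shiftMapR root par lam)^[n + 1] f)) ^ ((1:ℝ)/((n:ℝ)+1))) := by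
      refine ⟨0, ?_⟩
      rintro x ⟨m, rfl⟩
      exact Real.rpow_nonneg (Stmt8Aux.opNorm_nonneg β _) _
    have h1 : specRad root par β lam
        ≤ (opNorm β (fun f => (shiftMapR root par lam)^[n + 1] f)) ^ ((1:ℝ)/((n:ℝ)+1)) :=
      ciInf_le hbb n
    calc specRad root par β lam ^ (n + 1)
        ≤ ((opNorm β (fun f => (shiftMapR root par lam)^[n + 1] f))
            ^ ((1:ℝ)/((n:ℝ)+1))) ^ (n + 1) := pow_le_pow_left₀ hrad0 h1 (n + 1)
      _ = opNorm β (fun f => (shiftMapR root par lam)^[n + 1] f) := by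
          rw [show (1:ℝ)/((n:ℝ)+1) = (((n+1 : ℕ)):ℝ)⁻¹ by push_cast; ring]
          exact Real.rpow_inv_natCast_pow (Stmt8Aux.opNorm_nonneg β _) (Nat.succ_ne_zero n)
  have hφn : ∀ n : ℕ, ‖φ n‖ * specRad root par β lam ^ n
      ≤ opNorm β (gammaMap par depth lam φ) := by
    intro n
    cases n with
    | zero =>
      calc ‖φ 0‖ * specRad root par β lam ^ 0 = ‖φ 0‖ * 1 := by norm_num
        _ ≤ ‖φ 0‖ * opNorm β (fun f => (shiftMapR root par lam)^[0] f) :=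
            mul_le_mul_of_nonneg_left hid (norm_nonneg _)
        _ ≤ opNorm β (gammaMap par depth lam φ) := part1 0
    | succ m =>
      calc ‖φ (m+1)‖ * specRad root par β lam ^ (m+1)
          ≤ ‖φ (m+1)‖ * opNorm β (fun f => (shiftMapR root par lam)^[m + 1] f) :=
            mul_le_mul_of_nonneg_left (hSpow m) (norm_nonneg _)
        _ ≤ opNorm β (gammaMap par depth lam φ) := part1 (m+1)
  intro w hw
  have hr0 : 0 < specRad root par β lam := lt_of_le_of_lt (norm_nonneg w) hw
  set r := specRad root par β lam with hrdef
  set Mop := opNorm β (gammaMap par depth lam φ) with hMop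
  have hq0 : 0 ≤ ‖w‖ / r := div_nonneg (norm_nonneg w) hr0.le
  have hq1 : ‖w‖ / r < 1 := (div_lt_one hr0).2 hw
  have hbound : ∀ n : ℕ, ‖φ n * w ^ n‖ ≤ Mop * (‖w‖ / r) ^ n := by
    intro n
    rw [norm_mul, norm_pow, div_pow, ← mul_div_assoc, le_div_iff₀ (pow_pos hr0 n)]
    calc ‖φ n‖ * ‖w‖ ^ n * r ^ n = (‖φ n‖ * r ^ n) * ‖w‖ ^ n := by ring
      _ ≤ Mop * ‖w‖ ^ n := mul_le_mul_of_nonneg_right (hφn n) (by positivity)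
  exact Summable.of_nonneg_of_le (fun n => norm_nonneg _) hbound
    ((summable_geometric_of_lt_one hq0 hq1).mul_left Mop)
end
end

section
/- Let S_λ ∈ B(ℓ²(β)) and let r > r(S_λ). If φ̂ : ℕ₀ → ℂ is such that ∑_{k≥0} φ̂(k) z^k converges for every |z| < r, then the series ∑_{k≥0} φ̂(k) S_λ^k converges in operator norm, φ̂ ∈ M(T_β, λ), and M_φ̂ = ∑_{k≥0} φ̂(k) S_λ^k. -/
open scoped ENNReal
open Filter

noncomputable section

section Aux
variable {V : Type*}

lemma two_rpow_eq (a : ℝ) : a ^ (2:ℝ) = a ^ 2 := by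
  rw [show (2:ℝ) = ((2:ℕ):ℝ) by norm_num, Real.rpow_natCast]

lemma wnormSq_nonneg {β : V → ℝ} (hβ : ∀ v, 0 < β v) (f : V → ℂ) : 0 ≤ wnormSq β f :=
  tsum_nonneg fun v => mul_nonneg (hβ v).le (by positivity)

lemma memL2_add {β : V → ℝ} (hβ : ∀ v, 0 < β v) {f g : V → ℂ}
    (hf : MemL2 β f) (hg : MemL2 β g) :
    MemL2 β (fun v => f v + g v) ∧
      wnormSq β (fun v => f v + g v)
        ≤ (Real.sqrt (wnormSq β f) + Real.sqrt (wnormSq β g)) ^ 2 := by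
  set a : V → ℝ := fun v => Real.sqrt (β v) * ‖f v‖ with ha
  set b : V → ℝ := fun v => Real.sqrt (β v) * ‖g v‖ with hb
  have ha0 : ∀ v, 0 ≤ a v := fun v => mul_nonneg (Real.sqrt_nonneg _) (norm_nonneg _)
  have hb0 : ∀ v, 0 ≤ b v := fun v => mul_nonneg (Real.sqrt_nonneg _) (norm_nonneg _)
  have hae : ∀ v, a v ^ (2:ℝ) = β v * ‖f v‖ ^ 2 := fun v => by
    rw [two_rpow_eq, ha, mul_pow, Real.sq_sqrt (hβ v).le]
  have hbe : ∀ v, b v ^ (2:ℝ) = β v * ‖g v‖ ^ 2 := fun v => by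
    rw [two_rpow_eq, hb, mul_pow, Real.sq_sqrt (hβ v).le]
  have hsa : Summable fun v => a v ^ (2:ℝ) := by
    simp only [hae]; exact hf
  have hsb : Summable fun v => b v ^ (2:ℝ) := by
    simp only [hbe]; exact hg
  obtain ⟨hsum, hle⟩ := Real.Lp_add_le_tsum_of_nonneg (by norm_num : (1:ℝ) ≤ 2) ha0 hb0 hsa hsb
  have key : ∀ v, β v * ‖f v + g v‖ ^ 2 ≤ (a v + b v) ^ (2:ℝ) := by
    intro v
    rw [two_rpow_eq]
    have h1 : ‖f v + g v‖ ≤ ‖f v‖ + ‖g v‖ := norm_add_le _ _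
    have h2 : β v * ‖f v + g v‖ ^ 2 = (Real.sqrt (β v) * ‖f v + g v‖) ^ 2 := by
      rw [mul_pow, Real.sq_sqrt (hβ v).le]
    rw [h2]
    have : Real.sqrt (β v) * ‖f v + g v‖ ≤ a v + b v := by
      rw [ha, hb, ← mul_add]
      exact mul_le_mul_of_nonneg_left h1 (Real.sqrt_nonneg _)
    exact pow_le_pow_left₀ (mul_nonneg (Real.sqrt_nonneg _) (norm_nonneg _)) this 2
  have hmem : MemL2 β (fun v => f v + g v) :=
    Summable.of_nonneg_of_le (fun v => mul_nonneg (hβ v).le (by positivity)) key hsum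
  refine ⟨hmem, ?_⟩
  have h3 : wnormSq β (fun v => f v + g v) ≤ ∑' v, (a v + b v) ^ (2:ℝ) :=
    Summable.tsum_le_tsum key hmem hsum
  refine h3.trans ?_
  have hta : ∑' v, a v ^ (2:ℝ) = wnormSq β f := tsum_congr hae
  have htb : ∑' v, b v ^ (2:ℝ) = wnormSq β g := tsum_congr hbe
  rw [hta, htb] at hle
  have h4 : (wnormSq β f) ^ ((1:ℝ)/2) = Real.sqrt (wnormSq β f) := (Real.sqrt_eq_rpow _).symm
  have h5 : (wnormSq β g) ^ ((1:ℝ)/2) = Real.sqrt (wnormSq β g) := (Real.sqrt_eq_rpow _).symm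
  rw [h4, h5] at hle
  have h6 : 0 ≤ ∑' v, (a v + b v) ^ (2:ℝ) :=
    tsum_nonneg fun v => Real.rpow_nonneg (add_nonneg (ha0 v) (hb0 v)) _
  calc ∑' v, (a v + b v) ^ (2:ℝ)
      = ((∑' v, (a v + b v) ^ (2:ℝ)) ^ ((1:ℝ)/2)) ^ 2 := by
        rw [← Real.sqrt_eq_rpow, Real.sq_sqrt h6]
    _ ≤ (Real.sqrt (wnormSq β f) + Real.sqrt (wnormSq β g)) ^ 2 :=
        pow_le_pow_left₀ (Real.rpow_nonneg h6 _) hle 2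

lemma memL2_smul {β : V → ℝ} (c : ℂ) {f : V → ℂ} (hf : MemL2 β f) :
    MemL2 β (fun v => c * f v) ∧ wnormSq β (fun v => c * f v) = ‖c‖ ^ 2 * wnormSq β f := by
  have h : ∀ v, β v * ‖c * f v‖ ^ 2 = ‖c‖ ^ 2 * (β v * ‖f v‖ ^ 2) := fun v => by
    rw [norm_mul]; ring
  constructor
  · unfold MemL2; simp only [h]; exact hf.mul_left _
  · unfold wnormSq MemL2 at *; simp only [h]; exact tsum_mul_left

/-- `T` maps `ℓ²(β)` to itself with bound `C`. -/
def Bnd (β : V → ℝ) (T : (V → ℂ) → (V → ℂ)) (C : ℝ) : Prop :=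
  0 ≤ C ∧ ∀ f, MemL2 β f → MemL2 β (T f) ∧ wnormSq β (T f) ≤ C ^ 2 * wnormSq β f

lemma Bnd.sqrt_le {β : V → ℝ} {T C} (h : Bnd β T C) {f : V → ℂ}
    (hf : MemL2 β f) :
    Real.sqrt (wnormSq β (T f)) ≤ C * Real.sqrt (wnormSq β f) := by
  have := (h.2 f hf).2
  calc Real.sqrt (wnormSq β (T f)) ≤ Real.sqrt (C ^ 2 * wnormSq β f) := Real.sqrt_le_sqrt this
    _ = C * Real.sqrt (wnormSq β f) := by
        rw [Real.sqrt_mul (sq_nonneg C), Real.sqrt_sq h.1]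

lemma Bnd.mono {β : V → ℝ} (hβ : ∀ v, 0 < β v) {T C D} (h : Bnd β T C) (hCD : C ≤ D) :
    Bnd β T D := by
  refine ⟨h.1.trans hCD, fun f hf => ⟨(h.2 f hf).1, (h.2 f hf).2.trans ?_⟩⟩
  exact mul_le_mul_of_nonneg_right (pow_le_pow_left₀ h.1 hCD 2) (wnormSq_nonneg hβ f)

lemma Bnd.comp {β : V → ℝ} {T S C D} (hT : Bnd β T C) (hS : Bnd β S D) :
    Bnd β (fun f => T (S f)) (C * D) := by
  refine ⟨mul_nonneg hT.1 hS.1, fun f hf => ?_⟩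
  obtain ⟨h1, h2⟩ := hS.2 f hf
  obtain ⟨h3, h4⟩ := hT.2 (S f) h1
  refine ⟨h3, h4.trans ?_⟩
  calc C ^ 2 * wnormSq β (S f) ≤ C ^ 2 * (D ^ 2 * wnormSq β f) :=
        mul_le_mul_of_nonneg_left h2 (sq_nonneg C)
    _ = (C * D) ^ 2 * wnormSq β f := by ring

lemma Bnd.add {β : V → ℝ} (hβ : ∀ v, 0 < β v) {T S : (V → ℂ) → (V → ℂ)} {C D}
    (hT : Bnd β T C) (hS : Bnd β S D) :
    Bnd β (fun f v => T f v + S f v) (C + D) := by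
  refine ⟨add_nonneg hT.1 hS.1, fun f hf => ?_⟩
  obtain ⟨h1, h2⟩ := hT.2 f hf
  obtain ⟨h3, h4⟩ := hS.2 f hf
  obtain ⟨h5, h6⟩ := memL2_add hβ h1 h3
  refine ⟨h5, h6.trans ?_⟩
  have e1 := Bnd.sqrt_le hT hf
  have e2 := Bnd.sqrt_le hS hf
  calc (Real.sqrt (wnormSq β (T f)) + Real.sqrt (wnormSq β (S f))) ^ 2
      ≤ (C * Real.sqrt (wnormSq β f) + D * Real.sqrt (wnormSq β f)) ^ 2 := by
        apply pow_le_pow_left₀ (add_nonneg (Real.sqrt_nonneg _) (Real.sqrt_nonneg _))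
          (add_le_add e1 e2)
    _ = (C + D) ^ 2 * Real.sqrt (wnormSq β f) ^ 2 := by ring
    _ = (C + D) ^ 2 * wnormSq β f := by rw [Real.sq_sqrt (wnormSq_nonneg hβ f)]

lemma Bnd.smul {β : V → ℝ} {T : (V → ℂ) → (V → ℂ)} {C} (c : ℂ)
    (hT : Bnd β T C) : Bnd β (fun f v => c * T f v) (‖c‖ * C) := by
  refine ⟨mul_nonneg (norm_nonneg c) hT.1, fun f hf => ?_⟩
  obtain ⟨h1, h2⟩ := hT.2 f hf
  obtain ⟨h3, h4⟩ := memL2_smul c h1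
  refine ⟨h3, h4.le.trans ?_⟩
  calc ‖c‖ ^ 2 * wnormSq β (T f) ≤ ‖c‖ ^ 2 * (C ^ 2 * wnormSq β f) :=
        mul_le_mul_of_nonneg_left h2 (sq_nonneg _)
    _ = (‖c‖ * C) ^ 2 * wnormSq β f := by ring

lemma memL2_zero (β : V → ℝ) : MemL2 β (fun _ => (0:ℂ)) := by
  unfold MemL2; simp [summable_zero]

lemma wnormSq_zero (β : V → ℝ) : wnormSq β (fun _ => (0:ℂ)) = 0 := by
  unfold wnormSq; simp

lemma Bnd.finsum {β : V → ℝ} (hβ : ∀ v, 0 < β v) {T : ℕ → (V → ℂ) → (V → ℂ)} {C : ℕ → ℝ}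
    (s : Finset ℕ) (h : ∀ k ∈ s, Bnd β (T k) (C k)) :
    Bnd β (fun f v => ∑ k ∈ s, T k f v) (∑ k ∈ s, C k) := by
  induction s using Finset.induction_on with
  | empty =>
      refine ⟨le_refl _, fun f hf => ?_⟩
      simp only [Finset.sum_empty]
      exact ⟨memL2_zero β,
        by rw [wnormSq_zero]; exact mul_nonneg (by positivity) (wnormSq_nonneg hβ f)⟩
  | @insert a s ha ih =>
      have h1 : Bnd β (fun f v => T a f v + ∑ k ∈ s, T k f v) (C a + ∑ k ∈ s, C k) :=
        Bnd.add hβ (h a (Finset.mem_insert_self a s))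
          (ih fun k hk => h k (Finset.mem_insert_of_mem hk))
      simpa [Finset.sum_insert ha] using h1

lemma opNorm_le {β : V → ℝ} {T C} (h : Bnd β T C) : opNorm β T ≤ C :=
  csInf_le ⟨0, fun x hx => hx.1⟩ ⟨h.1, fun f hf => (h.2 f hf).2⟩

lemma opNorm_nonneg (β : V → ℝ) (T : (V → ℂ) → (V → ℂ)) : 0 ≤ opNorm β T :=
  Real.sInf_nonneg fun x hx => hx.1

lemma opNorm_bnd {β : V → ℝ} {T : (V → ℂ) → (V → ℂ)} {C}
    (h : Bnd β T C) (hmem : ∀ f, MemL2 β f → MemL2 β (T f)) : Bnd β T (opNorm β T) := by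
  set S : Set ℝ := {C : ℝ | 0 ≤ C ∧ ∀ f : V → ℂ, MemL2 β f →
    wnormSq β (T f) ≤ C ^ 2 * wnormSq β f} with hS
  have hne : S.Nonempty := ⟨C, h.1, fun f hf => (h.2 f hf).2⟩
  have hbb : BddBelow S := ⟨0, fun x hx => hx.1⟩
  have hclosed : IsClosed S := by
    have : S = Set.Ici 0 ∩ ⋂ (f : V → ℂ) (_ : MemL2 β f),
        {C : ℝ | wnormSq β (T f) ≤ C ^ 2 * wnormSq β f} := by
      ext c
      simp only [hS, Set.mem_setOf_eq, Set.mem_inter_iff, Set.mem_Ici, Set.mem_iInter]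
    rw [this]
    exact isClosed_Ici.inter (isClosed_iInter fun f => isClosed_iInter fun _ =>
      isClosed_le continuous_const ((continuous_pow 2).mul continuous_const))
  have hmem' := hclosed.csInf_mem hne hbb
  exact ⟨hmem'.1, fun f hf => ⟨hmem f hf, hmem'.2 f hf⟩⟩

end Aux

section Aux2
variable {V : Type*} [DecidableEq V] (root : V) (par : V → V) (lam : V → ℝ) (depth : V → ℕ)

lemma shift_iter (hdepth0 : depth root = 0)
    (hdepth : ∀ v, v ≠ root → depth v = depth (par v) + 1) (f : V → ℂ) :
    ∀ (k : ℕ) (v : V), (shiftMapR root par lam)^[k] f v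
      = if k ≤ depth v then ((lamProd par lam k v : ℝ) : ℂ) * f (par^[k] v) else 0 := by
  intro k
  induction k with
  | zero => intro v; simp [lamProd]
  | succ k ih =>
      intro v
      rw [Function.iterate_succ_apply']
      show (if v = root then 0 else (lam v : ℂ) * (shiftMapR root par lam)^[k] f (par v)) = _
      by_cases hv : v = root
      · subst hv
        simp [hdepth0]
      · rw [if_neg hv, ih (par v)]
        have hd : depth v = depth (par v) + 1 := hdepth v hv
        have hiff : k + 1 ≤ depth v ↔ k ≤ depth (par v) := by omega
        by_cases hk : k ≤ depth (par v)
        · rw [if_pos hk, if_pos (hiff.mpr hk)]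
          have h1 : par^[k] (par v) = par^[k + 1] v := (Function.iterate_succ_apply par k v).symm
          have h2 : lamProd par lam (k + 1) v = lamProd par lam k (par v) * lam v := by
            unfold lamProd
            rw [Finset.prod_range_succ']
            simp [Function.iterate_succ_apply]
          rw [h1, h2]
          push_cast
          ring
        · rw [if_neg hk, if_neg (fun h => hk (hiff.mp h)), mul_zero]

lemma gamma_eq (hdepth0 : depth root = 0)
    (hdepth : ∀ v, v ≠ root → depth v = depth (par v) + 1) (φ : ℕ → ℂ) (f : V → ℂ) (v : V) :
    gammaMap par depth lam φ f v
      = ∑ k ∈ Finset.range (depth v + 1), φ k * (shiftMapR root par lam)^[k] f v := by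
  unfold gammaMap
  refine Finset.sum_congr rfl fun k hk => ?_
  rw [Finset.mem_range] at hk
  rw [shift_iter root par lam depth hdepth0 hdepth f k v, if_pos (by omega)]
  ring

lemma tail_eq (hdepth0 : depth root = 0)
    (hdepth : ∀ v, v ≠ root → depth v = depth (par v) + 1) (φ : ℕ → ℂ) (f : V → ℂ) (v : V)
    (n : ℕ) :
    gammaMap par depth lam φ f v
        - ∑ k ∈ Finset.range n, φ k * (shiftMapR root par lam)^[k] f v
      = ∑ k ∈ Finset.Ico n (depth v + 1), φ k * (shiftMapR root par lam)^[k] f v := by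
  rw [gamma_eq root par lam depth hdepth0 hdepth φ f v]
  by_cases hn : n ≤ depth v + 1
  · rw [Finset.sum_Ico_eq_sub _ hn]
  · have h1 : Finset.Ico n (depth v + 1) = ∅ := Finset.Ico_eq_empty (by omega)
    rw [h1, Finset.sum_empty]
    have h2 : ∑ k ∈ Finset.range n, φ k * (shiftMapR root par lam)^[k] f v
        = ∑ k ∈ Finset.range (depth v + 1), φ k * (shiftMapR root par lam)^[k] f v := by
      symm
      apply Finset.sum_subset (Finset.range_subset_range.mpr (by omega))
      intro k hk1 hk2
      rw [Finset.mem_range] at hk1 hk2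
      rw [shift_iter root par lam depth hdepth0 hdepth f k v, if_neg (by omega), mul_zero]
    rw [h2, sub_self]

end Aux2


set_option maxHeartbeats 2000000 in
/-- if r > r(S_λ) and ∑ φ̂(k) z^k converges for |z| < r, then φ̂ ∈ M(T_β,λ)
and ∑ φ̂(k) S_λ^k converges in operator norm to M_φ̂. -/
theorem stmt10 {V : Type*} [Countable V] [Infinite V] [DecidableEq V]
    (root : V) (par : V → V) (depth : V → ℕ)
    (hdepth0 : depth root = 0)
    (hdepth : ∀ v, v ≠ root → depth v = depth (par v) + 1)
    (hreach : ∀ v, par^[depth v] v = root)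
    (hleafless : ∀ u : V, ∃ v : V, v ≠ root ∧ par v = u)
    (β : V → ℝ) (hβ : ∀ v, 0 < β v)
    (lam : V → ℝ) (hlam : ∀ v, v ≠ root → 0 < lam v)
    (hbdd : ∃ C : ℝ, ∀ f : V → ℂ, MemL2 β f →
        MemL2 β (shiftMapR root par lam f) ∧
        wnormSq β (shiftMapR root par lam f) ≤ C * wnormSq β f)
    (r : ℝ) (hr : specRad root par β lam < r)
    (φ : ℕ → ℂ)
    (hconv : ∀ z : ℂ, ‖z‖ < r → Summable fun k : ℕ => φ k * z ^ k) :
    Mult par depth β lam φ ∧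
    Filter.Tendsto
      (fun n : ℕ => opNorm β (fun f v =>
        gammaMap par depth lam φ f v
          - ∑ k ∈ Finset.range n, φ k * (shiftMapR root par lam)^[k] f v))
      Filter.atTop (nhds 0) := by
  classical
  obtain ⟨C0, hC0⟩ := hbdd
  set Λ := shiftMapR root par lam with hΛdef
  -- the basic bound on Λ
  set B := Real.sqrt (max C0 0) with hBdef
  have hBΛ : Bnd β Λ B := by
    refine ⟨Real.sqrt_nonneg _, fun f hf => ⟨(hC0 f hf).1, ?_⟩⟩
    have hB2 : B ^ 2 = max C0 0 := Real.sq_sqrt (le_max_right C0 0)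
    rw [hB2]
    exact (hC0 f hf).2.trans
      (mul_le_mul_of_nonneg_right (le_max_left _ _) (wnormSq_nonneg hβ f))
  have hBk : ∀ k, Bnd β (fun f => Λ^[k] f) (B ^ k) := by
    intro k
    induction k with
    | zero =>
        refine ⟨by simp, fun f hf => ?_⟩
        simp only [Function.iterate_zero, id_eq, pow_zero, one_pow, one_mul]
        exact ⟨hf, le_refl _⟩
    | succ k ih =>
        have h := Bnd.comp hBΛ ih
        have he : (fun f => Λ ((fun f : V → ℂ => Λ^[k] f) f)) = fun f : V → ℂ => Λ^[k+1] f :=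
          funext fun f => (Function.iterate_succ_apply' Λ k f).symm
        rw [he] at h
        exact Bnd.mono hβ h (le_of_eq (by ring))
  have hpres : ∀ k f, MemL2 β f → MemL2 β (Λ^[k] f) := fun k f hf => ((hBk k).2 f hf).1
  -- extract an index from the spectral radius hypothesis
  have hr' : (⨅ n : ℕ, (opNorm β (fun f => Λ^[n + 1] f)) ^ ((1:ℝ)/((n:ℝ)+1))) < r := hr
  obtain ⟨n0, hn0⟩ := exists_lt_of_ciInf_lt hr'
  set N := n0 + 1 with hNdef
  set A := opNorm β (fun f => Λ^[N] f) with hAdef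
  have hA0 : 0 ≤ A := opNorm_nonneg _ _
  have hAbnd : Bnd β (fun f => Λ^[N] f) A := opNorm_bnd (hBk N) (fun f hf => hpres N f hf)
  have hNr : (N:ℝ) = (n0:ℝ) + 1 := by rw [hNdef]; push_cast; ring
  have ht : A ^ ((1:ℝ)/(N:ℝ)) < r := by rw [hNr]; exact hn0
  set t := A ^ ((1:ℝ)/(N:ℝ)) with htdef
  have ht0 : 0 ≤ t := Real.rpow_nonneg hA0 _
  have hr0 : 0 < r := lt_of_le_of_lt ht0 ht
  set ρ := (t + r)/2 with hρdef
  have hρ0 : 0 < ρ := by rw [hρdef]; linarith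
  have htρ : t < ρ := by rw [hρdef]; linarith
  have hρr : ρ < r := by rw [hρdef]; linarith
  have hAρ : A ≤ ρ ^ N := by
    have h1 : t ^ (N:ℕ) = A := by
      rw [htdef, ← Real.rpow_natCast (A ^ ((1:ℝ)/(N:ℝ))) N, ← Real.rpow_mul hA0]
      rw [one_div, inv_mul_cancel₀ (by positivity : (N:ℝ) ≠ 0), Real.rpow_one]
    calc A = t ^ N := h1.symm
      _ ≤ ρ ^ N := pow_le_pow_left₀ ht0 htρ.le N
  set M := (max (B / ρ) 1) ^ N with hMdef
  have hM0 : 0 ≤ M := by positivity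
  -- geometric bound on the powers of Λ
  have hMbnd : ∀ k, Bnd β (fun f => Λ^[k] f) (M * ρ ^ k) := by
    intro k
    have step : ∀ q s : ℕ, Bnd β (fun f => Λ^[N * q + s] f) (A ^ q * B ^ s) := by
      intro q
      induction q with
      | zero => intro s; simpa using hBk s
      | succ q ih =>
          intro s
          have h := Bnd.comp hAbnd (ih s)
          have he : (fun f => (fun f : V → ℂ => Λ^[N] f) ((fun f : V → ℂ => Λ^[N*q+s] f) f))
              = fun f : V → ℂ => Λ^[N*(q+1)+s] f := by
            funext f
            show Λ^[N] (Λ^[N*q+s] f) = _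
            rw [← Function.iterate_add_apply]
            congr 1
            ring
          rw [he] at h
          exact Bnd.mono hβ h (le_of_eq (by ring))
    have hks : N * (k / N) + k % N = k := Nat.div_add_mod k N
    have hNpos : 0 < N := by omega
    have hsN : k % N < N := Nat.mod_lt _ hNpos
    have h := step (k / N) (k % N)
    rw [hks] at h
    refine Bnd.mono hβ h ?_
    have e1 : A ^ (k/N) ≤ ρ ^ (N * (k/N)) := by
      rw [pow_mul]
      exact pow_le_pow_left₀ hA0 hAρ _
    have e2 : B ^ (k % N) ≤ M * ρ ^ (k % N) := by
      have hBsplit : B = (B/ρ) * ρ := (div_mul_cancel₀ B hρ0.ne').symm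
      rw [hBsplit, mul_pow]
      refine mul_le_mul_of_nonneg_right ?_ (by positivity)
      calc (B/ρ) ^ (k % N) ≤ (max (B/ρ) 1) ^ (k % N) :=
            pow_le_pow_left₀ (div_nonneg hBΛ.1 hρ0.le) (le_max_left _ _) _
        _ ≤ (max (B/ρ) 1) ^ N := pow_le_pow_right₀ (le_max_right _ _) hsN.le
        _ = M := hMdef.symm
    calc A ^ (k/N) * B ^ (k%N) ≤ ρ ^ (N*(k/N)) * (M * ρ ^ (k%N)) :=
          mul_le_mul e1 e2 (pow_nonneg hBΛ.1 _) (by positivity)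
      _ = M * ρ ^ (N*(k/N) + k%N) := by rw [pow_add]; ring
      _ = M * ρ ^ k := by rw [hks]
  -- summability of the coefficients
  set ρ' := (ρ + r)/2 with hρ'def
  have hρρ' : ρ < ρ' := by rw [hρ'def]; linarith
  have hρ'r : ρ' < r := by rw [hρ'def]; linarith
  have hρ'0 : 0 < ρ' := lt_trans hρ0 hρρ'
  have hz : ‖(ρ' : ℂ)‖ < r := by
    rw [Complex.norm_real, Real.norm_eq_abs, abs_of_pos hρ'0]
    exact hρ'r
  have hsummz := hconv (ρ' : ℂ) hz
  have htendz : Filter.Tendsto (fun k => ‖φ k * (ρ':ℂ)^k‖) Filter.atTop (nhds 0) := by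
    simpa using hsummz.tendsto_atTop_zero.norm
  obtain ⟨K, hK⟩ := htendz.bddAbove_range
  have hKb : ∀ k, ‖φ k‖ * ρ' ^ k ≤ K := by
    intro k
    have := hK (Set.mem_range_self k)
    simpa [norm_mul, norm_pow, Complex.norm_real, Real.norm_eq_abs, abs_of_pos hρ'0] using this
  have hK0 : 0 ≤ K := le_trans (by positivity) (hKb 0)
  set c : ℕ → ℝ := fun k => ‖φ k‖ * (M * ρ ^ k) with hcdef
  have hc0 : ∀ k, 0 ≤ c k := fun k => by
    rw [hcdef]
    positivity
  have hcsum : Summable c := by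
    refine Summable.of_nonneg_of_le (f := fun k => (M * K) * (ρ/ρ')^k) hc0 ?_ ?_
    · intro k
      have h1 : ρ ^ k = ρ' ^ k * (ρ/ρ')^k := by
        rw [← mul_pow, mul_div_cancel₀ _ hρ'0.ne']
      have h2 : c k = M * (‖φ k‖ * ρ' ^ k) * (ρ/ρ')^k := by
        rw [hcdef]
        dsimp only
        rw [h1]; ring
      rw [h2]
      have : M * (‖φ k‖ * ρ' ^ k) ≤ M * K := mul_le_mul_of_nonneg_left (hKb k) hM0
      exact mul_le_mul_of_nonneg_right this (pow_nonneg (by positivity) k)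
    · exact (summable_geometric_of_lt_one (by positivity)
        (by rw [div_lt_one hρ'0]; exact hρρ')).mul_left _
  set D : ℕ → ℝ := fun n => ∑' k, c (k + n) with hDdef
  have hcshift : ∀ n, Summable fun k => c (k + n) := fun n => (summable_nat_add_iff n).2 hcsum
  have hD0 : ∀ n, 0 ≤ D n := fun n => tsum_nonneg fun k => hc0 _
  have hDtend : Filter.Tendsto D Filter.atTop (nhds 0) := by
    rw [hDdef]
    exact tendsto_sum_nat_add c
  have hIco : ∀ n m, ∑ k ∈ Finset.Ico n m, c k ≤ D n := by
    intro n m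
    rw [Finset.sum_Ico_eq_sum_range]
    calc ∑ i ∈ Finset.range (m - n), c (n + i)
        = ∑ i ∈ Finset.range (m - n), c (i + n) :=
          Finset.sum_congr rfl fun i _ => by rw [add_comm]
      _ ≤ D n := Summable.sum_le_tsum _ (fun i _ => hc0 _) (hcshift n)
  -- the tail operators are bounded by D n
  have htail : ∀ n, Bnd β (fun f v => ∑ k ∈ Finset.Ico n (depth v + 1), φ k * Λ^[k] f v)
      (D n) := by
    intro n
    refine ⟨hD0 n, fun f hf => ?_⟩
    have hfin : ∀ m, Bnd β (fun f v => ∑ k ∈ Finset.Ico n m, φ k * Λ^[k] f v)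
        (∑ k ∈ Finset.Ico n m, c k) := by
      intro m
      refine Bnd.finsum hβ (T := fun k f v => φ k * Λ^[k] f v) (C := c) (Finset.Ico n m)
        fun k _ => ?_
      have := Bnd.smul (φ k) (hMbnd k)
      rw [hcdef]
      exact this
    have hgm : ∀ (m : ℕ) (v : V), depth v + 1 ≤ m →
        (∑ k ∈ Finset.Ico n (depth v + 1), φ k * Λ^[k] f v)
          = ∑ k ∈ Finset.Ico n m, φ k * Λ^[k] f v := by
      intro m v hm
      apply Finset.sum_subset (Finset.Ico_subset_Ico le_rfl hm)
      intro k hk1 hk2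
      rw [Finset.mem_Ico] at hk1 hk2
      have hkd : ¬ k ≤ depth v := by omega
      rw [hΛdef, shift_iter root par lam depth hdepth0 hdepth f k v, if_neg hkd, mul_zero]
    have hFbound : ∀ F : Finset V,
        ∑ v ∈ F, β v * ‖∑ k ∈ Finset.Ico n (depth v + 1), φ k * Λ^[k] f v‖^2
          ≤ D n ^ 2 * wnormSq β f := by
      intro F
      set m := n + 1 + F.sup depth with hmdef
      obtain ⟨hmem, hle⟩ := (hfin m).2 f hf
      calc ∑ v ∈ F, β v * ‖∑ k ∈ Finset.Ico n (depth v + 1), φ k * Λ^[k] f v‖^2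
          = ∑ v ∈ F, β v * ‖∑ k ∈ Finset.Ico n m, φ k * Λ^[k] f v‖^2 :=
            Finset.sum_congr rfl fun v hv => by
              rw [hgm m v (by have := Finset.le_sup (f := depth) hv; omega)]
        _ ≤ wnormSq β (fun v => ∑ k ∈ Finset.Ico n m, φ k * Λ^[k] f v) :=
            Summable.sum_le_tsum F (fun v _ => mul_nonneg (hβ v).le (by positivity)) hmem
        _ ≤ (∑ k ∈ Finset.Ico n m, c k)^2 * wnormSq β f := hle
        _ ≤ D n ^ 2 * wnormSq β f := by
            refine mul_le_mul_of_nonneg_right ?_ (wnormSq_nonneg hβ f)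
            exact pow_le_pow_left₀ (Finset.sum_nonneg fun k _ => hc0 k) (hIco n m) 2
    have hmemg : MemL2 β (fun v => ∑ k ∈ Finset.Ico n (depth v + 1), φ k * Λ^[k] f v) :=
      summable_of_sum_le (fun v => mul_nonneg (hβ v).le (by positivity)) hFbound
    exact ⟨hmemg, Summable.tsum_le_of_sum_le hmemg hFbound⟩
  constructor
  · -- φ is a multiplier
    intro f hf
    have h := ((htail 0).2 f hf).1
    have he : gammaMap par depth lam φ f
        = fun v => ∑ k ∈ Finset.Ico 0 (depth v + 1), φ k * Λ^[k] f v := by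
      funext v
      rw [← Finset.range_eq_Ico, hΛdef]
      exact gamma_eq root par lam depth hdepth0 hdepth φ f v
    rw [he]
    exact h
  · -- operator-norm convergence
    have heq : ∀ n : ℕ, (fun f v => gammaMap par depth lam φ f v
          - ∑ k ∈ Finset.range n, φ k * Λ^[k] f v)
        = fun (f : V → ℂ) (v : V) => ∑ k ∈ Finset.Ico n (depth v + 1), φ k * Λ^[k] f v := by
      intro n
      funext f v
      rw [hΛdef]
      exact tail_eq root par lam depth hdepth0 hdepth φ f v n
    have hle : ∀ n : ℕ, opNorm β (fun f v => gammaMap par depth lam φ f v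
          - ∑ k ∈ Finset.range n, φ k * Λ^[k] f v) ≤ D n := by
      intro n
      rw [heq n]
      exact opNorm_le (htail n)
    exact squeeze_zero (fun n => opNorm_nonneg _ _) hle hDtend
end
end

section
/- Assume T is a countably infinite rooted leafless directed tree, β ⊆ (0,∞), λ ⊆ (0,∞), S_λ ∈ B(ℓ²(β)), and ∑_{v ∈ Chi(u)} λ_v = 1 for every u ∈ V. If w ∈ ℂ satisfies |w| = ‖S_λ‖, then ∑_{v∈V} β_v^{-1} |w|^{2|v|} = ∞; i.e., w is not a bounded point evaluation on T_β. -/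
open scoped ENNReal
open Filter

noncomputable section

set_option maxHeartbeats 1000000 in
/-- if the weights sum to 1 over the children of every vertex and
|w| = ‖S_λ‖, then w is not a bounded point evaluation on T_β. -/
theorem stmt14 {V : Type*} [Countable V] [Infinite V] [DecidableEq V]
    (root : V) (par : V → V) (depth : V → ℕ)
    (hdepth0 : depth root = 0)
    (hdepth : ∀ v, v ≠ root → depth v = depth (par v) + 1)
    (hreach : ∀ v, par^[depth v] v = root)
    (hleafless : ∀ u : V, ∃ v : V, v ≠ root ∧ par v = u)
    (β : V → ℝ) (hβ : ∀ v, 0 < β v)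
    (lam : V → ℝ) (hlam : ∀ v, v ≠ root → 0 < lam v)
    (hbdd : ∃ C : ℝ, ∀ f : V → ℂ, MemL2 β f →
        MemL2 β (shiftMapR root par lam f) ∧
        wnormSq β (shiftMapR root par lam f) ≤ C * wnormSq β f)
    (hsum1 : ∀ u : V, HasSum (fun v : {v : V // v ≠ root ∧ par v = u} => lam v.1) 1)
    (w : ℂ) (hw : ‖w‖ = opNorm β (shiftMapR root par lam)) :
    ¬ Summable fun v => (β v)⁻¹ * ‖w‖ ^ (2 * depth v) := by
  intro hS
  classical
  obtain ⟨C0, hC0⟩ := hbdd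
  set T := shiftMapR root par lam with hT
  set N := opNorm β T with hNdef
  have hwnn : ∀ f : V → ℂ, 0 ≤ wnormSq β f := fun f =>
    tsum_nonneg fun v => mul_nonneg (hβ v).le (sq_nonneg _)
  -- the admissible set is nonempty
  have hSetNe : ∃ C : ℝ, 0 ≤ C ∧ ∀ f : V → ℂ, MemL2 β f →
      wnormSq β (T f) ≤ C ^ 2 * wnormSq β f := by
    refine ⟨max C0 1, le_trans zero_le_one (le_max_right _ _), fun f hf => ?_⟩
    have h1 : C0 ≤ (max C0 1) ^ 2 := by
      nlinarith [le_max_left C0 1, le_max_right C0 1]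
    calc wnormSq β (T f) ≤ C0 * wnormSq β f := (hC0 f hf).2
      _ ≤ (max C0 1) ^ 2 * wnormSq β f := mul_le_mul_of_nonneg_right h1 (hwnn f)
  -- basis vectors
  have heVecEq : ∀ u : V, (fun v => β v * ‖eVec u v‖ ^ 2)
      = fun v => if v = u then β u else 0 := by
    intro u; funext v; by_cases h : v = u <;> simp [eVec, h]
  have heVecL2 : ∀ u : V, MemL2 β (eVec u) := by
    intro u
    rw [MemL2, heVecEq u]
    refine summable_of_ne_finset_zero (s := {u}) fun b hb => ?_
    simp only [Finset.mem_singleton] at hb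
    simp [hb]
  have heVecN : ∀ u : V, wnormSq β (eVec u) = β u := by
    intro u
    rw [wnormSq, heVecEq u, tsum_eq_sum (s := {u}) (fun b hb => by
      simp only [Finset.mem_singleton] at hb; simp [hb])]
    simp
  -- the image of a basis vector
  have hSeq : ∀ u : V, (fun v => β v * ‖T (eVec u) v‖ ^ 2)
      = Set.indicator {v : V | v ≠ root ∧ par v = u} (fun v => β v * lam v ^ 2) := by
    intro u; funext v
    rw [Set.indicator_apply]
    by_cases hr : v = root
    · simp [hT, shiftMapR, hr]
    · by_cases hp : par v = u
      · have h1 : eVec u (par v) = 1 := by simp [eVec, hp]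
        have hmem : v ∈ {v : V | v ≠ root ∧ par v = u} := ⟨hr, hp⟩
        simp only [hT, shiftMapR, if_neg hr, h1, mul_one, if_pos hmem]
        rw [Complex.norm_real, Real.norm_eq_abs, sq_abs]
      · have h1 : eVec u (par v) = 0 := by simp [eVec, hp]
        have hmem : v ∉ {v : V | v ≠ root ∧ par v = u} := fun h => hp h.2
        rw [if_neg hmem]
        simp [hT, shiftMapR, if_neg hr, h1]
  -- A u : squared norm of S e_u
  set A : V → ℝ := fun u => ∑' v : {v : V // v ≠ root ∧ par v = u}, β v.1 * lam v.1 ^ 2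
    with hAdef
  have hAsum : ∀ u : V,
      Summable fun v : {v : V // v ≠ root ∧ par v = u} => β v.1 * lam v.1 ^ 2 := by
    intro u
    have h1 : Summable fun v => β v * ‖T (eVec u) v‖ ^ 2 := (hC0 (eVec u) (heVecL2 u)).1
    rw [hSeq u] at h1
    exact summable_subtype_iff_indicator.mpr h1
  have hAw : ∀ u : V, wnormSq β (T (eVec u)) = A u := by
    intro u
    rw [wnormSq, hSeq u, hAdef]
    exact (tsum_subtype _ _).symm
  have hAnn : ∀ u : V, 0 ≤ A u := fun u =>
    tsum_nonneg fun v => mul_nonneg (hβ _).le (sq_nonneg _)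
  -- A u ≤ C^2 β u for admissible C
  have hACu : ∀ C : ℝ, (0 ≤ C ∧ ∀ f : V → ℂ, MemL2 β f →
      wnormSq β (T f) ≤ C ^ 2 * wnormSq β f) → ∀ u : V, A u ≤ C ^ 2 * β u := by
    intro C hC u
    have := hC.2 (eVec u) (heVecL2 u)
    rwa [hAw u, heVecN u] at this
  -- lower bound on N
  have hNlb : ∀ u : V, Real.sqrt (A u / β u) ≤ N := by
    intro u
    refine le_csInf ⟨_, hSetNe.choose_spec⟩ fun C hC => ?_
    have h1 : A u ≤ C ^ 2 * β u := hACu C hC u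
    have h2 : A u / β u ≤ C ^ 2 := (div_le_iff₀ (hβ u)).mpr (by linarith [h1])
    calc Real.sqrt (A u / β u) ≤ Real.sqrt (C ^ 2) := Real.sqrt_le_sqrt h2
      _ = C := by rw [Real.sqrt_sq hC.1]
  have hA_le : ∀ u : V, A u ≤ N ^ 2 * β u := by
    intro u
    have h0 : 0 ≤ A u / β u := div_nonneg (hAnn u) (hβ u).le
    have h1 : A u / β u ≤ N ^ 2 := by
      have := pow_le_pow_left₀ (Real.sqrt_nonneg _) (hNlb u) 2
      rwa [Real.sq_sqrt h0] at this
    calc A u = (A u / β u) * β u := (div_mul_cancel₀ (A u) (hβ u).ne').symm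
      _ ≤ N ^ 2 * β u := mul_le_mul_of_nonneg_right h1 (hβ u).le
  -- A u > 0
  have hApos : ∀ u : V, 0 < A u := by
    intro u
    obtain ⟨v0, hv0⟩ := hleafless u
    have h1 : β v0 * lam v0 ^ 2 ≤ A u :=
      Summable.le_tsum (hAsum u) ⟨v0, hv0⟩ fun b _ => mul_nonneg (hβ _).le (sq_nonneg _)
    have h2 : 0 < β v0 * lam v0 ^ 2 :=
      mul_pos (hβ v0) (pow_pos (hlam v0 hv0.1) 2)
    linarith
  have hNpos : 0 < N := by
    have h1 := hNlb root
    have h2 : 0 < Real.sqrt (A root / β root) :=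
      Real.sqrt_pos.mpr (div_pos (hApos root) (hβ root))
    linarith
  have hwpos : 0 < ‖w‖ := by rw [hw]; exact hNpos
  -- level summability
  have hlev : ∀ n : ℕ, Summable fun v : {v : V // depth v = n} => (β v.1)⁻¹ := by
    intro n
    have h1 : Summable fun v : {v : V // depth v = n} =>
        (β v.1)⁻¹ * ‖w‖ ^ (2 * n) := by
      refine (hS.subtype {v : V | depth v = n}).congr fun v => ?_
      simp only [Function.comp_apply]
      rw [show depth v.1 = n from v.2]
    have h2 := h1.mul_right ((‖w‖ ^ (2 * n))⁻¹)
    refine h2.congr fun v => ?_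
    have hne : ‖w‖ ^ (2 * n) ≠ 0 := pow_ne_zero _ hwpos.ne'
    rw [mul_assoc, mul_inv_cancel₀ hne, mul_one]
  set d : ℕ → ℝ := fun n => ∑' v : {v : V // depth v = n}, (β v.1)⁻¹ with hddef
  have hd0 : (β root)⁻¹ ≤ d 0 :=
    Summable.le_tsum (hlev 0) ⟨root, hdepth0⟩ fun b _ => inv_nonneg.mpr (hβ _).le
  -- child depth
  have hchd : ∀ u v : V, v ≠ root → par v = u → depth v = depth u + 1 := by
    intro u v h1 h2; rw [hdepth v h1, h2]
  -- children summability
  have hchi : ∀ u : V, Summable fun v : {v : V // v ≠ root ∧ par v = u} => (β v.1)⁻¹ := by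
    intro u
    have h1 : Summable fun v : {v : V // v ≠ root ∧ par v = u} =>
        (β v.1)⁻¹ * ‖w‖ ^ (2 * (depth u + 1)) := by
      refine (hS.subtype {v : V | v ≠ root ∧ par v = u}).congr fun v => ?_
      simp only [Function.comp_apply]
      rw [hchd u v.1 v.2.1 v.2.2]
    have h2 := h1.mul_right ((‖w‖ ^ (2 * (depth u + 1)))⁻¹)
    refine h2.congr fun v => ?_
    have hne : ‖w‖ ^ (2 * (depth u + 1)) ≠ 0 := pow_ne_zero _ hwpos.ne'
    rw [mul_assoc, mul_inv_cancel₀ hne, mul_one]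
  set B : V → ℝ := fun u => ∑' v : {v : V // v ≠ root ∧ par v = u}, (β v.1)⁻¹ with hBdef
  have hBnn : ∀ u : V, 0 ≤ B u := fun u => tsum_nonneg fun v => inv_nonneg.mpr (hβ _).le
  -- Cauchy-Schwarz lower bound on B
  have hB : ∀ u : V, 1 ≤ N ^ 2 * β u * B u := by
    intro u
    have htend : Filter.Tendsto
        (fun s : Finset {v : V // v ≠ root ∧ par v = u} => (∑ v ∈ s, lam v.1) ^ 2)
        Filter.atTop (nhds 1) := by
      have := (hsum1 u).comp (Filter.tendsto_id)
      have h2 : Filter.Tendsto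
          (fun s : Finset {v : V // v ≠ root ∧ par v = u} => ∑ v ∈ s, lam v.1)
          Filter.atTop (nhds 1) := hsum1 u
      have h3 := ((continuous_pow 2).tendsto (1 : ℝ)).comp h2
      simpa [Function.comp_def] using h3
    refine le_of_tendsto htend (Filter.Eventually.of_forall fun s => ?_)
    have hcs := Finset.sum_mul_sq_le_sq_mul_sq s
      (fun v => lam v.1 * Real.sqrt (β v.1)) (fun v => (Real.sqrt (β v.1))⁻¹)
    have he1 : ∀ v : {v : V // v ≠ root ∧ par v = u},
        lam v.1 * Real.sqrt (β v.1) * (Real.sqrt (β v.1))⁻¹ = lam v.1 := by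
      intro v
      have : Real.sqrt (β v.1) ≠ 0 := (Real.sqrt_pos.mpr (hβ v.1)).ne'
      field_simp
    have he2 : ∀ v : {v : V // v ≠ root ∧ par v = u},
        (lam v.1 * Real.sqrt (β v.1)) ^ 2 = β v.1 * lam v.1 ^ 2 := by
      intro v
      rw [mul_pow, Real.sq_sqrt (hβ v.1).le]; ring
    have he3 : ∀ v : {v : V // v ≠ root ∧ par v = u},
        ((Real.sqrt (β v.1))⁻¹) ^ 2 = (β v.1)⁻¹ := by
      intro v
      rw [inv_pow, Real.sq_sqrt (hβ v.1).le]
    rw [Finset.sum_congr rfl (fun v _ => he1 v), Finset.sum_congr rfl (fun v _ => he2 v),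
      Finset.sum_congr rfl (fun v _ => he3 v)] at hcs
    have hs1 : ∑ v ∈ s, β v.1 * lam v.1 ^ 2 ≤ A u :=
      Summable.sum_le_tsum s (fun b _ => mul_nonneg (hβ _).le (sq_nonneg _)) (hAsum u)
    have hs2 : ∑ v ∈ s, (β v.1)⁻¹ ≤ B u :=
      Summable.sum_le_tsum s (fun b _ => inv_nonneg.mpr (hβ _).le) (hchi u)
    have hs1' : ∑ v ∈ s, β v.1 * lam v.1 ^ 2 ≤ N ^ 2 * β u := le_trans hs1 (hA_le u)
    have hsnn : (0:ℝ) ≤ ∑ v ∈ s, (β v.1)⁻¹ :=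
      Finset.sum_nonneg fun v _ => inv_nonneg.mpr (hβ _).le
    calc (∑ v ∈ s, lam v.1) ^ 2
        ≤ (∑ v ∈ s, β v.1 * lam v.1 ^ 2) * ∑ v ∈ s, (β v.1)⁻¹ := hcs
      _ ≤ (N ^ 2 * β u) * B u := by
          exact mul_le_mul hs1' hs2 hsnn (mul_nonneg (sq_nonneg N) (hβ u).le)
  have hBlb : ∀ u : V, (N ^ 2 * β u)⁻¹ ≤ B u := by
    intro u
    have hpos : 0 < N ^ 2 * β u := mul_pos (pow_pos hNpos 2) (hβ u)
    rw [← one_div, div_le_iff₀ hpos]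
    linarith [hB u, mul_comm (B u) (N ^ 2 * β u)]
  -- the depth-level equivalence
  have hroot0 : ∀ v : V, depth v = 0 → v = root := by
    intro v h
    have := hreach v
    rwa [h, Function.iterate_zero, id_eq] at this
  have key : ∀ n : ℕ, (N ^ 2)⁻¹ * d n ≤ d (n + 1) := by
    intro n
    have hvne : ∀ v : {v : V // depth v = n + 1}, v.1 ≠ root := by
      intro v h
      have := v.2
      rw [h, hdepth0] at this
      exact Nat.succ_ne_zero n this.symm
    have hpd : ∀ v : {v : V // depth v = n + 1}, depth (par v.1) = n := by
      intro v
      have h1 := hdepth v.1 (hvne v)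
      rw [v.2] at h1
      omega
    let e : (Σ u : {u : V // depth u = n}, {v : V // v ≠ root ∧ par v = u.1}) ≃
        {v : V // depth v = n + 1} :=
      { toFun := fun x => ⟨x.2.1, by rw [hchd x.1.1 x.2.1 x.2.2.1 x.2.2.2, x.1.2]⟩
        invFun := fun v => ⟨⟨par v.1, hpd v⟩, ⟨v.1, hvne v, rfl⟩⟩
        left_inv := by
          rintro ⟨⟨u, hu⟩, v, hv1, hv2⟩
          refine Sigma.ext (Subtype.ext hv2) ?_
          refine (Subtype.heq_iff_coe_eq ?_).mpr rfl
          intro x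
          simp [hv2]
        right_inv := fun v => rfl }
    have hg2 : Summable fun x : (Σ u : {u : V // depth u = n},
        {v : V // v ≠ root ∧ par v = u.1}) => (β x.2.1)⁻¹ := by
      have := (Equiv.summable_iff e (f := fun v : {v : V // depth v = n + 1} => (β v.1)⁻¹)).mpr
        (hlev (n + 1))
      exact this
    have hde : d (n + 1) = ∑' u : {u : V // depth u = n}, B u.1 := by
      have h1 : d (n + 1) = ∑' x : (Σ u : {u : V // depth u = n},
          {v : V // v ≠ root ∧ par v = u.1}), (β x.2.1)⁻¹ :=
        (Equiv.tsum_eq e (fun v : {v : V // depth v = n + 1} => (β v.1)⁻¹)).symm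
      exact h1.trans (Summable.tsum_sigma' (fun u => hchi u.1) hg2)
    have hsumB : Summable fun u : {u : V // depth u = n} => B u.1 := by
      have := hg2.sigma
      exact this.congr fun u => rfl
    have hsumLB : Summable fun u : {u : V // depth u = n} => (N ^ 2 * β u.1)⁻¹ := by
      have h1 := (hlev n).mul_left ((N ^ 2)⁻¹)
      refine h1.congr fun u => ?_
      rw [mul_inv]
    have h2 : ∑' u : {u : V // depth u = n}, (N ^ 2 * β u.1)⁻¹ ≤
        ∑' u : {u : V // depth u = n}, B u.1 :=
      Summable.tsum_le_tsum (fun u => hBlb u.1) hsumLB hsumB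
    have h3 : ∑' u : {u : V // depth u = n}, (N ^ 2 * β u.1)⁻¹ = (N ^ 2)⁻¹ * d n := by
      rw [hddef, ← tsum_mul_left]
      exact tsum_congr fun u => by rw [mul_inv]
    rw [hde, ← h3]
    exact h2
  -- induction
  have hind : ∀ n : ℕ, (β root)⁻¹ ≤ N ^ (2 * n) * d n := by
    intro n
    induction n with
    | zero => simpa using hd0
    | succ n ih =>
      have h1 := key n
      have hdnn : 0 ≤ d n := tsum_nonneg fun v => inv_nonneg.mpr (hβ _).le
      have h2 : N ^ (2 * (n + 1)) * ((N ^ 2)⁻¹ * d n) ≤ N ^ (2 * (n + 1)) * d (n + 1) :=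
        mul_le_mul_of_nonneg_left h1 (by positivity)
      have h3 : N ^ (2 * (n + 1)) * ((N ^ 2)⁻¹ * d n) = N ^ (2 * n) * d n := by
        have hN2 : N ^ 2 ≠ 0 := by positivity
        rw [show 2 * (n + 1) = 2 * n + 2 by ring, pow_add]
        field_simp
      rw [h3] at h2
      linarith [ih]
  -- final contradiction
  have hsig : Summable fun n : ℕ => ∑' v : {v : V // depth v = n},
      (β v.1)⁻¹ * ‖w‖ ^ (2 * depth v.1) := by
    have h1 : Summable fun x : (Σ n : ℕ, {v : V // depth v = n}) =>
        (β x.2.1)⁻¹ * ‖w‖ ^ (2 * depth x.2.1) :=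
      (Equiv.summable_iff (Equiv.sigmaFiberEquiv depth)).mpr hS
    exact h1.sigma
  have hterm : ∀ n : ℕ, (β root)⁻¹ ≤ ∑' v : {v : V // depth v = n},
      (β v.1)⁻¹ * ‖w‖ ^ (2 * depth v.1) := by
    intro n
    have h1 : (fun v : {v : V // depth v = n} => (β v.1)⁻¹ * ‖w‖ ^ (2 * depth v.1))
        = fun v => ‖w‖ ^ (2 * n) * (β v.1)⁻¹ := by
      funext v
      rw [v.2, mul_comm]
    rw [h1, tsum_mul_left, hw]
    exact hind n
  have hzero := hsig.tendsto_atTop_zero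
  have hle := ge_of_tendsto hzero (Filter.Eventually.of_forall hterm)
  have := hβ root
  have : 0 < (β root)⁻¹ := by positivity
  linarith

end
end

section
/- Let T be countably infinite rooted leafless, β ⊆ (0,∞), λ ⊆ (0,∞) with ∑_{v∈Chi(u)} λ_v = 1 for all u, and S_λ ∈ B(ℓ²(β)). For every multiplier φ̂ ∈ M(T_β,λ), every f ∈ ℓ²(β), and every w in the interior of BPE(T_β), one has V_w(M_φ̂ f) = φ(w) · V_w(f), where φ(w) = ∑_{n≥0} φ̂(n) wⁿ. Consequently M_φ̂* k_w = conj(φ(w)) k_w, so {conj(φ(w)) : w ∈ int BPE(T_β)} ⊆ σ_p(M_φ̂*). -/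
open scoped ENNReal
open Filter

noncomputable section

section Stmt16Aux

variable {V : Type*}

private lemma depthIter {root : V} {par : V → V} {depth : V → ℕ}
    (hdepth0 : depth root = 0)
    (hdepth : ∀ v, v ≠ root → depth v = depth (par v) + 1) :
    ∀ (k : ℕ) (v : V), k ≤ depth v → depth (par^[k] v) + k = depth v := by
  intro k
  induction k with
  | zero => intro v _; simp
  | succ k ih =>
    intro v hk
    have h1 := ih v (Nat.le_of_succ_le hk)
    have hne : par^[k] v ≠ root := by
      intro h; rw [h, hdepth0] at h1; omega
    rw [Function.iterate_succ_apply']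
    have h2 := hdepth _ hne
    omega

private lemma lamProdSucc (par : V → V) (lam : V → ℝ) (k : ℕ) (v : V) :
    lamProd par lam (k + 1) v = lam v * lamProd par lam k (par v) := by
  unfold lamProd
  rw [Finset.prod_range_succ', mul_comm]
  rfl

private lemma lamProdNonneg {root : V} {par : V → V} {depth : V → ℕ}
    (hdepth0 : depth root = 0)
    (hdepth : ∀ v, v ≠ root → depth v = depth (par v) + 1)
    {lam : V → ℝ} (hlam : ∀ v, v ≠ root → 0 ≤ lam v) :
    ∀ (k : ℕ) (v : V), k ≤ depth v → 0 ≤ lamProd par lam k v := by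
  intro k v hk
  apply Finset.prod_nonneg
  intro j hj
  rw [Finset.mem_range] at hj
  apply hlam
  intro h
  have := depthIter hdepth0 hdepth j v (le_trans hj.le hk)
  rw [h, hdepth0] at this
  omega

private lemma hasSumLamProd {root : V} {par : V → V} {depth : V → ℕ}
    (hdepth0 : depth root = 0)
    (hdepth : ∀ v, v ≠ root → depth v = depth (par v) + 1)
    {lam : V → ℝ} (hlamnn : ∀ v, v ≠ root → 0 ≤ lam v)
    (hsum1 : ∀ u : V, HasSum (fun v : {v : V // v ≠ root ∧ par v = u} => lam v.1) 1) :
    ∀ (k : ℕ) (u : V),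
      HasSum (fun v : {v : V // par^[k] v = u ∧ depth v = depth u + k} =>
        lamProd par lam k v.1) 1 := by
  intro k
  induction k with
  | zero =>
    intro u
    haveI : Unique {v : V // par^[0] v = u ∧ depth v = depth u + 0} :=
      { default := ⟨u, rfl, rfl⟩
        uniq := fun x => Subtype.ext x.2.1 }
    have h := hasSum_fintype (fun v : {v : V // par^[0] v = u ∧ depth v = depth u + 0} =>
      lamProd par lam 0 v.1)
    convert h using 1
    rw [Fintype.sum_unique]
    simp [lamProd]
  | succ k ih =>
    intro u
    have hne : ∀ v : V, depth v = depth u + (k + 1) → v ≠ root := by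
      intro v h2 hv; rw [hv, hdepth0] at h2; omega
    let e : {v : V // par^[k+1] v = u ∧ depth v = depth u + (k+1)} ≃
        Σ x : {v : V // par^[k] v = u ∧ depth v = depth u + k},
          {c : V // c ≠ root ∧ par c = x.1} :=
      { toFun := fun v => ⟨⟨par v.1,
            by rw [← Function.iterate_succ_apply]; exact v.2.1,
            by have h1 := hdepth v.1 (hne v.1 v.2.2); have h2 := v.2.2; omega⟩,
          ⟨v.1, hne v.1 v.2.2, rfl⟩⟩
        invFun := fun p => ⟨p.2.1,
          by rw [Function.iterate_succ_apply, p.2.2.2]; exact p.1.2.1,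
          by rw [hdepth p.2.1 p.2.2.1, p.2.2.2, p.1.2.2]; omega⟩
        left_inv := fun v => rfl
        right_inv := fun p => by
          obtain ⟨⟨x, hx1, hx2⟩, c⟩ := p
          obtain ⟨c, hc1, hc2⟩ := c
          refine Sigma.ext (Subtype.ext ?_) ?_
          · exact hc2
          · refine (Subtype.heq_iff_coe_eq (fun v => ?_)).mpr rfl
            have hc2' : par c = x := hc2
            show v ≠ root ∧ par v = par c ↔ v ≠ root ∧ par v = x
            rw [hc2'] }
    have hfib : ∀ x : {v : V // par^[k] v = u ∧ depth v = depth u + k},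
        HasSum (fun c : {c : V // c ≠ root ∧ par c = x.1} =>
          lamProd par lam (k+1) c.1) (lamProd par lam k x.1) := by
      intro x
      have h := (hsum1 x.1).mul_right (lamProd par lam k x.1)
      rw [one_mul] at h
      have he : (fun c : {c : V // c ≠ root ∧ par c = x.1} => lamProd par lam (k+1) c.1)
          = fun c => lam c.1 * lamProd par lam k x.1 := by
        funext c
        rw [lamProdSucc, c.2.2]
      rw [he]
      exact h
    have hnn : ∀ p : Σ x : {v : V // par^[k] v = u ∧ depth v = depth u + k},
        {c : V // c ≠ root ∧ par c = x.1}, 0 ≤ lamProd par lam (k+1) p.2.1 := by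
      rintro ⟨x, c⟩
      dsimp only
      apply lamProdNonneg hdepth0 hdepth hlamnn
      have h1 := hdepth c.1 c.2.1
      rw [c.2.2, x.2.2] at h1
      omega
    have hsummable : Summable (fun p : Σ x : {v : V // par^[k] v = u ∧ depth v = depth u + k},
        {c : V // c ≠ root ∧ par c = x.1} => lamProd par lam (k+1) p.2.1) := by
      apply (summable_sigma_of_nonneg hnn).2
      refine ⟨fun x => (hfib x).summable, ?_⟩
      have heq : (fun x : {v : V // par^[k] v = u ∧ depth v = depth u + k} =>
          ∑' c : {c : V // c ≠ root ∧ par c = x.1}, lamProd par lam (k+1) c.1)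
          = fun x => lamProd par lam k x.1 := funext fun x => (hfib x).tsum_eq
      rw [heq]
      exact (ih u).summable
    have hsig := hsummable.hasSum.sigma (fun x => hfib x)
    have h1 : (∑' p : Σ x : {v : V // par^[k] v = u ∧ depth v = depth u + k},
        {c : V // c ≠ root ∧ par c = x.1}, lamProd par lam (k+1) p.2.1) = 1 :=
      hsig.unique (ih u)
    have hF : HasSum (fun p : Σ x : {v : V // par^[k] v = u ∧ depth v = depth u + k},
        {c : V // c ≠ root ∧ par c = x.1} => lamProd par lam (k+1) p.2.1) 1 := by
      rw [← h1]; exact hsummable.hasSum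
    exact e.symm.hasSum_iff.mp hF

private lemma hasSumFiberV {par : V → V} {depth : V → ℕ}
    (hdi : ∀ (k : ℕ) (v : V), k ≤ depth v → depth (par^[k] v) + k = depth v)
    (k : ℕ) (g : V → ℂ) (hg0 : ∀ v, ¬ k ≤ depth v → g v = 0)
    (c : V → ℂ) (C : V → ℝ) {S : ℂ} {Sn : ℝ}
    (hfib : ∀ u, HasSum
      (fun x : {v : V // par^[k] v = u ∧ depth v = depth u + k} => g x.1) (c u))
    (hfibn : ∀ u, HasSum
      (fun x : {v : V // par^[k] v = u ∧ depth v = depth u + k} => ‖g x.1‖) (C u))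
    (hc : HasSum c S) (hC : HasSum C Sn) :
    HasSum g S ∧ HasSum (fun v => ‖g v‖) Sn := by
  let e : (Σ u : V, {v : V // par^[k] v = u ∧ depth v = depth u + k}) ≃
      {v : V // k ≤ depth v} :=
    { toFun := fun p => ⟨p.2.1, by have := p.2.2.2; omega⟩
      invFun := fun x => ⟨par^[k] x.1, ⟨x.1, rfl, by have := hdi k x.1 x.2; omega⟩⟩
      left_inv := fun p => by
        obtain ⟨u, v, h1, h2⟩ := p
        subst h1
        rfl
      right_inv := fun x => rfl }
  have hFn : Summable (fun p : Σ u : V, {v : V // par^[k] v = u ∧ depth v = depth u + k} =>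
      ‖g p.2.1‖) := by
    apply (summable_sigma_of_nonneg (fun p => norm_nonneg _)).2
    refine ⟨fun u => (hfibn u).summable, ?_⟩
    have heq : (fun u => ∑' x : {v : V // par^[k] v = u ∧ depth v = depth u + k}, ‖g x.1‖)
        = C := funext fun u => (hfibn u).tsum_eq
    rw [heq]
    exact hC.summable
  have hFnsum : HasSum (fun p : Σ u : V, {v : V // par^[k] v = u ∧ depth v = depth u + k} =>
      ‖g p.2.1‖) Sn := by
    have h1 := hFn.hasSum.sigma (fun u => hfibn u)
    rw [← h1.unique hC]
    exact hFn.hasSum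
  have hsumF : Summable (fun p : Σ u : V, {v : V // par^[k] v = u ∧ depth v = depth u + k} =>
      g p.2.1) := Summable.of_norm hFn
  have hF : HasSum (fun p : Σ u : V, {v : V // par^[k] v = u ∧ depth v = depth u + k} =>
      g p.2.1) S := by
    have h1 := hsumF.hasSum.sigma (fun u => hfib u)
    rw [← h1.unique hc]
    exact hsumF.hasSum
  have hsub : HasSum (fun x : {v : V // k ≤ depth v} => g x.1) S := e.hasSum_iff.mp hF
  have hsubn : HasSum (fun x : {v : V // k ≤ depth v} => ‖g x.1‖) Sn := e.hasSum_iff.mp hFnsum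
  constructor
  · refine (hasSum_subtype_iff_of_support_subset ?_).mp hsub
    intro v hv
    by_contra h
    exact hv (by show g v = 0; exact hg0 v h)
  · refine (hasSum_subtype_iff_of_support_subset ?_).mp hsubn
    intro v hv
    by_contra h
    exact hv (by show ‖g v‖ = 0; rw [hg0 v h, norm_zero])

end Stmt16Aux


set_option maxHeartbeats 1000000 in
/-- for every multiplier φ̂, every f ∈ ℓ²(β) and every w in the interior of
BPE(T_β): V_w(M_φ̂ f) = φ(w)·V_w(f) with φ(w) = ∑ φ̂(n) wⁿ; consequently
M_φ̂* k_w = conj(φ(w))·k_w and conj(φ(w)) ∈ σ_p(M_φ̂*). -/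
theorem stmt16 {V : Type*} [Countable V] [Infinite V] [DecidableEq V]
    (root : V) (par : V → V) (depth : V → ℕ)
    (hdepth0 : depth root = 0)
    (hdepth : ∀ v, v ≠ root → depth v = depth (par v) + 1)
    (hreach : ∀ v, par^[depth v] v = root)
    (hleafless : ∀ u : V, ∃ v : V, v ≠ root ∧ par v = u)
    (β : V → ℝ) (hβ : ∀ v, 0 < β v)
    (lam : V → ℝ) (hlam : ∀ v, v ≠ root → 0 < lam v)
    (hbdd : ∃ C : ℝ, ∀ f : V → ℂ, MemL2 β f →
        MemL2 β (shiftMapR root par lam f) ∧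
        wnormSq β (shiftMapR root par lam f) ≤ C * wnormSq β f)
    (hsum1 : ∀ u : V, HasSum (fun v : {v : V // v ≠ root ∧ par v = u} => lam v.1) 1)
    (φ : ℕ → ℂ) (hφ : Mult par depth β lam φ)
    (w : ℂ)
    (hw : w ∈ interior {z : ℂ | Summable fun v => (β v)⁻¹ * ‖z‖ ^ (2 * depth v)}) :
    -- V_w (M_φ̂ f) = φ(w) · V_w f
    (∀ f : V → ℂ, MemL2 β f →
        (∑' v, gammaMap par depth lam φ f v * w ^ depth v)
          = (∑' n : ℕ, φ n * w ^ n) * ∑' v, f v * w ^ depth v)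
    -- M_φ̂* k_w = conj(φ(w)) • k_w, via the defining property of the adjoint
    ∧ (∀ f : V → ℂ, MemL2 β f →
        winner β (gammaMap par depth lam φ f)
            (fun v => ((starRingEnd ℂ) w) ^ depth v / ((β v : ℝ) : ℂ))
          = winner β f ((starRingEnd ℂ) (∑' n : ℕ, φ n * w ^ n) •
              fun v => ((starRingEnd ℂ) w) ^ depth v / ((β v : ℝ) : ℂ)))
    -- conj(φ(w)) ∈ σ_p(M_φ̂*)
    ∧ (∃ g : V → ℂ, g ≠ 0 ∧ MemL2 β g ∧ ∀ f : V → ℂ, MemL2 β f →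
        winner β (gammaMap par depth lam φ f) g
          = (∑' n : ℕ, φ n * w ^ n) * winner β f g) := by
  classical
  have hdi := depthIter (root := root) (par := par) (depth := depth) hdepth0 hdepth
  have hlamnn : ∀ v, v ≠ root → 0 ≤ lam v := fun v hv => (hlam v hv).le
  have hgen := hasSumLamProd (root := root) (par := par) (depth := depth)
    hdepth0 hdepth hlamnn hsum1
  have hwmem : Summable fun v => (β v)⁻¹ * ‖w‖ ^ (2 * depth v) := by
    have h : w ∈ {z : ℂ | Summable fun v => (β v)⁻¹ * ‖z‖ ^ (2 * depth v)} :=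
      interior_subset hw
    exact h
  -- choose ρ > ‖w‖ still in the BPE set
  obtain ⟨ε, hε, hball⟩ := Metric.mem_nhds_iff.mp (mem_interior_iff_mem_nhds.mp hw)
  set ρ : ℝ := ‖w‖ + ε / 2 with hρdef
  have hρw : ‖w‖ < ρ := by rw [hρdef]; linarith
  have hρpos : 0 < ρ := lt_of_le_of_lt (norm_nonneg w) hρw
  have hSρ : Summable fun v => (β v)⁻¹ * ρ ^ (2 * depth v) := by
    by_cases hw0 : w = 0
    · have hz : ((ρ : ℝ) : ℂ) ∈ Metric.ball w ε := by
        rw [Metric.mem_ball, dist_eq_norm, hw0, sub_zero, Complex.norm_real,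
          Real.norm_eq_abs, abs_of_pos hρpos, hρdef, hw0]
        simp
        linarith
      have hz2' : ((ρ : ℝ) : ℂ) ∈ {z : ℂ | Summable fun v => (β v)⁻¹ * ‖z‖ ^ (2 * depth v)} :=
        hball hz
      have hz2 : Summable (fun v => (β v)⁻¹ * ‖((ρ : ℝ) : ℂ)‖ ^ (2 * depth v)) := hz2'
      have : ‖((ρ : ℝ) : ℂ)‖ = ρ := by
        rw [Complex.norm_real, Real.norm_eq_abs, abs_of_pos hρpos]
      rwa [this] at hz2
    · have hwn : ‖w‖ ≠ 0 := norm_ne_zero_iff.mpr hw0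
      have hwpos : 0 < ‖w‖ := norm_pos_iff.mpr hw0
      set z : ℂ := ((ρ / ‖w‖ : ℝ) : ℂ) * w with hzdef
      have hz1 : ‖z‖ = ρ := by
        rw [hzdef, norm_mul, Complex.norm_real, Real.norm_eq_abs,
          abs_of_pos (by positivity), div_mul_cancel₀ _ hwn]
      have hz : z ∈ Metric.ball w ε := by
        rw [Metric.mem_ball, dist_eq_norm]
        have hzw : z - w = ((ρ / ‖w‖ - 1 : ℝ) : ℂ) * w := by
          rw [hzdef]; push_cast; ring
        rw [hzw, norm_mul, Complex.norm_real, Real.norm_eq_abs]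
        have h3 : 0 ≤ ρ / ‖w‖ - 1 := by
          rw [sub_nonneg, le_div_iff₀ hwpos, one_mul]
          exact hρw.le
        rw [abs_of_nonneg h3, sub_mul, div_mul_cancel₀ _ hwn, one_mul]
        rw [hρdef]
        linarith
      have hz2' : z ∈ {z : ℂ | Summable fun v => (β v)⁻¹ * ‖z‖ ^ (2 * depth v)} := hball hz
      have hz2 : Summable (fun v => (β v)⁻¹ * ‖z‖ ^ (2 * depth v)) := hz2'
      rwa [hz1] at hz2
  -- Cauchy-Schwarz-type summability
  have hCS : ∀ f : V → ℂ, MemL2 β f → Summable fun v => ‖f v‖ * ‖w‖ ^ depth v := by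
    intro f hf
    apply Summable.of_nonneg_of_le (fun v => by positivity)
      (g := fun v => ‖f v‖ * ‖w‖ ^ depth v) ?_ ((hf.add hwmem).div_const 2)
    intro v
    have hb := hβ v
    have key2 : ‖w‖ ^ (2 * depth v) = (‖w‖ ^ depth v) ^ 2 := by
      rw [two_mul, pow_add, sq]
    rw [key2]
    have h1 : 0 ≤ (β v)⁻¹ * (β v * ‖f v‖ - ‖w‖ ^ depth v) ^ 2 := by positivity
    have h2 : (β v)⁻¹ * (β v * ‖f v‖ - ‖w‖ ^ depth v) ^ 2
        = β v * ‖f v‖ ^ 2 - 2 * (‖f v‖ * ‖w‖ ^ depth v) + (β v)⁻¹ * (‖w‖ ^ depth v) ^ 2 := by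
      field_simp
      ring
    rw [h2] at h1
    linarith
  have hCS' : ∀ f : V → ℂ, MemL2 β f → Summable fun v => f v * w ^ depth v := by
    intro f hf
    apply Summable.of_norm
    have heq : (fun v => ‖f v * w ^ depth v‖) = fun v => ‖f v‖ * ‖w‖ ^ depth v := by
      funext v; rw [norm_mul, norm_pow]
    rw [heq]
    exact hCS f hf
  -- the geometric bound for φ
  have heroot : MemL2 β (eVec root) := by
    apply summable_of_ne_finset_zero (s := {root})
    intro v hv
    rw [Finset.mem_singleton] at hv
    simp [eVec, hv]
  have hΓe := hφ (eVec root) heroot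
  have hge : ∀ v, gammaMap par depth lam φ (eVec root) v
      = ((lamProd par lam (depth v) v : ℝ) : ℂ) * φ (depth v) := by
    intro v
    simp only [gammaMap]
    rw [Finset.sum_eq_single (depth v)]
    · rw [show eVec root (par^[depth v] v) = 1 from by simp [eVec, hreach v], mul_one]
    · intro k hk hkne
      rw [Finset.mem_range] at hk
      have hkle : k ≤ depth v := by omega
      have hne : par^[k] v ≠ root := by
        intro h
        have := hdi k v hkle
        rw [h, hdepth0] at this
        omega
      simp [eVec, hne]
    · intro h
      exact absurd (Finset.self_mem_range_succ _) h
  set K := ∑' v, β v * ‖gammaMap par depth lam φ (eVec root) v‖ ^ 2 with hKdef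
  set A := ∑' v, (β v)⁻¹ * ρ ^ (2 * depth v) with hAdef
  have hK0 : 0 ≤ K := tsum_nonneg fun v => mul_nonneg (hβ v).le (sq_nonneg _)
  have hA0 : 0 ≤ A := tsum_nonneg fun v =>
    mul_nonneg (inv_nonneg.mpr (hβ v).le) (by positivity)
  have hφb : ∀ n : ℕ, ‖φ n‖ ≤ 2 * Real.sqrt (K * A) * (ρ⁻¹) ^ n := by
    intro n
    obtain ⟨s, hs⟩ := ((hgen n root).eventually
      (eventually_gt_nhds (by norm_num : (1:ℝ)/2 < 1))).exists
    have hdv : ∀ x : {v : V // par^[n] v = root ∧ depth v = depth root + n},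
        depth x.1 = n := by
      intro x
      have h := x.2.2
      omega
    have h1 : ∀ x ∈ s, Real.sqrt (β x.1) * (lamProd par lam n x.1 * ‖φ n‖)
        * Real.sqrt (β x.1)⁻¹ = lamProd par lam n x.1 * ‖φ n‖ := by
      intro x _
      rw [mul_comm (Real.sqrt (β x.1)) _, mul_assoc, ← Real.sqrt_mul (hβ x.1).le,
        mul_inv_cancel₀ (hβ x.1).ne', Real.sqrt_one, mul_one]
    have h2 : ∀ x ∈ s, (Real.sqrt (β x.1) * (lamProd par lam n x.1 * ‖φ n‖)) ^ 2
        = β x.1 * ‖gammaMap par depth lam φ (eVec root) x.1‖ ^ 2 := by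
      intro x _
      rw [mul_pow, Real.sq_sqrt (hβ x.1).le, hge x.1, hdv x, norm_mul, Complex.norm_real,
        Real.norm_eq_abs,
        abs_of_nonneg (lamProdNonneg hdepth0 hdepth hlamnn n x.1 (hdv x).ge)]
    have h3 : ∀ x ∈ s, (Real.sqrt (β x.1)⁻¹) ^ 2 = (β x.1)⁻¹ :=
      fun x _ => Real.sq_sqrt (inv_nonneg.mpr (hβ x.1).le)
    have hb2 : ∑ x ∈ s, β x.1 * ‖gammaMap par depth lam φ (eVec root) x.1‖ ^ 2 ≤ K := by
      rw [hKdef]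
      have himg := Finset.sum_image (s := s) (g := Subtype.val)
        (f := fun v => β v * ‖gammaMap par depth lam φ (eVec root) v‖ ^ 2)
        (fun x _ y _ h => Subtype.ext h)
      rw [← himg]
      exact Summable.sum_le_tsum _ (fun v _ => mul_nonneg (hβ v).le (sq_nonneg _)) hΓe
    have hb3 : ∑ x ∈ s, (β x.1)⁻¹ ≤ ((ρ ^ n)⁻¹) ^ 2 * A := by
      have hterm : ∀ x ∈ s, (β x.1)⁻¹
          = ((ρ ^ n)⁻¹) ^ 2 * ((β x.1)⁻¹ * ρ ^ (2 * depth x.1)) := by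
        intro x _
        rw [hdv x]
        have hpow : ρ ^ (2 * n) = (ρ ^ n) ^ 2 := by rw [two_mul, pow_add, sq]
        rw [hpow]
        field_simp
      rw [Finset.sum_congr rfl hterm, ← Finset.mul_sum]
      apply mul_le_mul_of_nonneg_left _ (by positivity)
      rw [hAdef]
      have himg := Finset.sum_image (s := s) (g := Subtype.val)
        (f := fun v => (β v)⁻¹ * ρ ^ (2 * depth v))
        (fun x _ y _ h => Subtype.ext h)
      rw [← himg]
      exact Summable.sum_le_tsum _ (fun v _ => mul_nonneg (inv_nonneg.mpr (hβ v).le)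
        (by positivity)) hSρ
    have hL : 1 / 2 * ‖φ n‖ ≤ ∑ x ∈ s, lamProd par lam n x.1 * ‖φ n‖ := by
      rw [← Finset.sum_mul]
      exact mul_le_mul_of_nonneg_right hs.le (norm_nonneg _)
    have hcs := Finset.sum_mul_sq_le_sq_mul_sq s
      (fun x => Real.sqrt (β x.1) * (lamProd par lam n x.1 * ‖φ n‖))
      (fun x => Real.sqrt (β x.1)⁻¹)
    rw [Finset.sum_congr rfl h1, Finset.sum_congr rfl h2, Finset.sum_congr rfl h3] at hcs
    have hsq : (∑ x ∈ s, lamProd par lam n x.1 * ‖φ n‖) ^ 2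
        ≤ K * (((ρ ^ n)⁻¹) ^ 2 * A) := by
      refine le_trans hcs (mul_le_mul hb2 hb3 ?_ hK0)
      exact Finset.sum_nonneg fun x _ => inv_nonneg.mpr (hβ x.1).le
    have h5 : (1 / 2 * ‖φ n‖) ^ 2 ≤ (Real.sqrt (K * A) * (ρ⁻¹) ^ n) ^ 2 := by
      have hr : (Real.sqrt (K * A) * (ρ⁻¹) ^ n) ^ 2 = K * (((ρ ^ n)⁻¹) ^ 2 * A) := by
        rw [mul_pow, Real.sq_sqrt (mul_nonneg hK0 hA0), inv_pow]
        ring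
      rw [hr]
      refine le_trans (pow_le_pow_left₀ (by positivity) hL 2) hsq
    have h6 : 1 / 2 * ‖φ n‖ ≤ Real.sqrt (K * A) * (ρ⁻¹) ^ n := by
      calc 1 / 2 * ‖φ n‖ = Real.sqrt ((1 / 2 * ‖φ n‖) ^ 2) :=
            (Real.sqrt_sq (by positivity)).symm
        _ ≤ Real.sqrt ((Real.sqrt (K * A) * (ρ⁻¹) ^ n) ^ 2) := Real.sqrt_le_sqrt h5
        _ = Real.sqrt (K * A) * (ρ⁻¹) ^ n := Real.sqrt_sq (by positivity)
    linarith
  set M := 2 * Real.sqrt (K * A) with hMdef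
  set q := ‖w‖ / ρ with hqdef
  have hq0 : 0 ≤ q := by positivity
  have hq1 : q < 1 := (div_lt_one hρpos).mpr hρw
  have hM0 : 0 ≤ M := by positivity
  have hφw : ∀ n, ‖φ n‖ * ‖w‖ ^ n ≤ M * q ^ n := by
    intro n
    calc ‖φ n‖ * ‖w‖ ^ n ≤ M * (ρ⁻¹) ^ n * ‖w‖ ^ n :=
        mul_le_mul_of_nonneg_right (hφb n) (by positivity)
      _ = M * q ^ n := by
        rw [hqdef, div_pow, div_eq_mul_inv, inv_pow]
        ring
  have hgeo : Summable fun n : ℕ => M * q ^ n :=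
    (summable_geometric_of_lt_one hq0 hq1).mul_left M
  have hφsum : Summable fun n : ℕ => φ n * w ^ n := by
    apply Summable.of_norm
    apply Summable.of_nonneg_of_le (fun n => norm_nonneg _) _ hgeo
    intro n
    rw [norm_mul, norm_pow]
    exact hφw n
  -- the central identity
  have key : ∀ f : V → ℂ, MemL2 β f →
      (∑' v, gammaMap par depth lam φ f v * w ^ depth v)
        = (∑' n : ℕ, φ n * w ^ n) * ∑' v, f v * w ^ depth v := by
    intro f hf
    set Sf := ∑' v, f v * w ^ depth v with hSfdef
    set SFn := ∑' v, ‖f v‖ * ‖w‖ ^ depth v with hSFndef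
    have hSfn : HasSum (fun v => ‖f v‖ * ‖w‖ ^ depth v) SFn := (hCS f hf).hasSum
    have hSf : HasSum (fun v => f v * w ^ depth v) Sf := (hCS' f hf).hasSum
    have hSFn0 : 0 ≤ SFn := tsum_nonneg fun v => by positivity
    set T : ℕ × V → ℂ := fun p =>
      if h : p.1 ≤ depth p.2 then
        ((lamProd par lam p.1 p.2 : ℝ) : ℂ) * φ p.1 * f (par^[p.1] p.2) * w ^ depth p.2
      else 0 with hTdef
    have hT0 : ∀ (k : ℕ) (v : V), ¬ k ≤ depth v → T (k, v) = 0 := fun k v h => dif_neg h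
    have hTk : ∀ k : ℕ, HasSum (fun v => T (k, v)) (φ k * w ^ k * Sf)
        ∧ HasSum (fun v => ‖T (k, v)‖) (‖φ k‖ * ‖w‖ ^ k * SFn) := by
      intro k
      refine hasSumFiberV hdi k (fun v => T (k, v)) (fun v h => hT0 k v h)
        (fun u => φ k * w ^ k * (f u * w ^ depth u))
        (fun u => ‖φ k‖ * ‖w‖ ^ k * (‖f u‖ * ‖w‖ ^ depth u)) ?_ ?_
        (hSf.mul_left (φ k * w ^ k)) (hSfn.mul_left (‖φ k‖ * ‖w‖ ^ k))
      · intro u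
        have hbase := (Complex.hasSum_ofReal.mpr (hgen k u)).mul_right
          (φ k * w ^ k * (f u * w ^ depth u))
        have heq : (fun x : {v : V // par^[k] v = u ∧ depth v = depth u + k} =>
            T (k, x.1))
            = fun x => ((lamProd par lam k x.1 : ℝ) : ℂ)
              * (φ k * w ^ k * (f u * w ^ depth u)) := by
          funext x
          obtain ⟨v, h1, h2⟩ := x
          have hkle : k ≤ depth v := by omega
          show T (k, v) = _
          rw [hTdef]
          simp only
          rw [dif_pos hkle, h1, h2, pow_add]
          ring
        rw [heq]
        simpa using hbase
      · intro u
        have hbase := (hgen k u).mul_right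
          (‖φ k‖ * ‖w‖ ^ k * (‖f u‖ * ‖w‖ ^ depth u))
        have heq : (fun x : {v : V // par^[k] v = u ∧ depth v = depth u + k} =>
            ‖T (k, x.1)‖)
            = fun x => lamProd par lam k x.1
              * (‖φ k‖ * ‖w‖ ^ k * (‖f u‖ * ‖w‖ ^ depth u)) := by
          funext x
          obtain ⟨v, h1, h2⟩ := x
          have hkle : k ≤ depth v := by omega
          show ‖T (k, v)‖ = _
          rw [hTdef]
          simp only
          rw [dif_pos hkle, h1, h2, pow_add]
          simp only [norm_mul, norm_pow, Complex.norm_real, Real.norm_eq_abs]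
          rw [abs_of_nonneg (lamProdNonneg hdepth0 hdepth hlamnn k v hkle)]
          ring
        rw [heq]
        simpa using hbase
    have hTnorm : Summable fun p : ℕ × V => ‖T p‖ := by
      rw [summable_prod_of_nonneg (Pi.le_def.mpr fun p => norm_nonneg _)]
      constructor
      · exact fun k => ((hTk k).2).summable
      · apply Summable.of_nonneg_of_le
          (fun k => tsum_nonneg fun v => norm_nonneg _) (fun k => ?_) (hgeo.mul_right SFn)
        rw [((hTk k).2).tsum_eq]
        exact mul_le_mul_of_nonneg_right (hφw k) hSFn0
    have hTs : Summable T := Summable.of_norm hTnorm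
    have e1 : (∑' p : ℕ × V, T p) = (∑' n : ℕ, φ n * w ^ n) * Sf := by
      rw [Summable.tsum_prod' hTs (fun k => ((hTk k).1).summable)]
      have heq : (fun k : ℕ => ∑' v, T (k, v)) = fun k => φ k * w ^ k * Sf :=
        funext fun k => ((hTk k).1).tsum_eq
      rw [heq, tsum_mul_right]
    have e2 : (∑' p : ℕ × V, T p) = ∑' v, gammaMap par depth lam φ f v * w ^ depth v := by
      have hswap : (∑' p : ℕ × V, T p) = ∑' q : V × ℕ, T (q.2, q.1) := by
        rw [← (Equiv.prodComm V ℕ).tsum_eq T]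
        rfl
      have hTswap : Summable fun q : V × ℕ => T (q.2, q.1) :=
        (Equiv.prodComm V ℕ).summable_iff.mpr hTs
      rw [hswap, Summable.tsum_prod' hTswap (fun v => summable_of_ne_finset_zero
        (s := Finset.range (depth v + 1)) (fun k hk => hT0 k v
          (by rw [Finset.mem_range] at hk; omega)))]
      apply tsum_congr
      intro v
      rw [tsum_eq_sum (s := Finset.range (depth v + 1))
        (fun k hk => hT0 k v (by rw [Finset.mem_range] at hk; omega))]
      simp only [gammaMap]
      rw [Finset.sum_mul]
      apply Finset.sum_congr rfl
      intro k hk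
      rw [Finset.mem_range] at hk
      show T (k, v) = _
      rw [hTdef]
      simp only
      rw [dif_pos (by omega : k ≤ depth v)]
    rw [← e2, e1]
  -- the reproducing-kernel pairing
  have hwin : ∀ g : V → ℂ,
      winner β g (fun v => ((starRingEnd ℂ) w) ^ depth v / ((β v : ℝ) : ℂ))
        = ∑' v, g v * w ^ depth v := by
    intro g
    apply tsum_congr
    intro v
    have hb : ((β v : ℝ) : ℂ) ≠ 0 := Complex.ofReal_ne_zero.mpr (hβ v).ne'
    rw [map_div₀, map_pow, Complex.conj_conj, Complex.conj_ofReal, mul_assoc,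
      div_mul_cancel₀ _ hb]
  refine ⟨key, ?_, ?_⟩
  · intro f hf
    rw [hwin (gammaMap par depth lam φ f), key f hf]
    simp only [winner]
    have heq : (fun v => f v * (starRingEnd ℂ) (((starRingEnd ℂ) (∑' n : ℕ, φ n * w ^ n) •
        fun v => ((starRingEnd ℂ) w) ^ depth v / ((β v : ℝ) : ℂ)) v) * ((β v : ℝ) : ℂ))
        = fun v => (∑' n : ℕ, φ n * w ^ n) * (f v * w ^ depth v) := by
      funext v
      have hb : ((β v : ℝ) : ℂ) ≠ 0 := Complex.ofReal_ne_zero.mpr (hβ v).ne'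
      simp only [Pi.smul_apply, smul_eq_mul, map_mul, Complex.conj_conj, map_div₀, map_pow,
        Complex.conj_ofReal]
      field_simp
    rw [heq, tsum_mul_left]
  · refine ⟨fun v => ((starRingEnd ℂ) w) ^ depth v / ((β v : ℝ) : ℂ), ?_, ?_, ?_⟩
    · intro h
      have h0 := congrFun h root
      rw [hdepth0] at h0
      simp only [pow_zero, Pi.zero_apply] at h0
      rw [div_eq_iff (Complex.ofReal_ne_zero.mpr (hβ root).ne'), zero_mul] at h0
      exact one_ne_zero h0
    · show Summable fun v => β v * ‖((starRingEnd ℂ) w) ^ depth v / ((β v : ℝ) : ℂ)‖ ^ 2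
      have heq : (fun v => β v * ‖((starRingEnd ℂ) w) ^ depth v / ((β v : ℝ) : ℂ)‖ ^ 2)
          = fun v => (β v)⁻¹ * ‖w‖ ^ (2 * depth v) := by
        funext v
        have hb := hβ v
        rw [norm_div, norm_pow, RCLike.norm_conj, Complex.norm_real, Real.norm_eq_abs,
          abs_of_pos hb, div_pow, ← pow_mul, mul_comm (depth v) 2]
        field_simp
      rw [heq]
      exact hwmem
    · intro f hf
      rw [hwin (gammaMap par depth lam φ f), hwin f]
      exact key f hf

end
end
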